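/- arXiv:2312.09671 — 2 statements merged into one kernel-verified Lean document; each statement's English description precedes it below -/
import Mathlib

section
/- In $A = \mathbb{C}[[x,y]]/(y^2 - x^2)$, the subring generated by $x$ and $x^k y$ is isomorphic to $\mathbb{C}[[x, y_k]]/(y_k^2 - x^{2k+2})$, where $y_k = x^k y$; i.e. the element $y_k = x^k y$ satisfies $y_k^2 - x^{2k+2} = 0$ in $A$, and this is the only relation. -/
/-!
The substitution `σ : x ↦ x, y ↦ x ^ k * y` of `R[[x, y]]` sends the monomial `x ^ m * y ^ n` to
`x ^ (m + k n) * y ^ n`; since this exponent map is injective, `σ` is an injective ring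
endomorphism whose image consists of the series supported on `m ≥ k n`. It satisfies
`σ (y ^ 2 - x ^ (2k+2)) = x ^ (2k) * (y ^ 2 - x ^ 2)`. Conversely, if `σ f = (y ^ 2 - x ^ 2) * g`,
comparing coefficients by induction on `m` shows that `g` is supported on `m ≥ k (n + 2)`, so
`g = x ^ (2k) * σ h`, and injectivity of `σ` gives `f = (y ^ 2 - x ^ (2k+2)) * h`. Hence
`σ⁻¹ (y ^ 2 - x ^ 2) = (y ^ 2 - x ^ (2k+2))`, and `σ` induces the required injective map of
quotients.
-/

open MvPowerSeries Finsupp Finset.HasAntidiagonal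

namespace MvPowerSeries

section MapExponents

variable {σ τ R : Type*} [Semiring R] (e : (σ →₀ ℕ) →+ (τ →₀ ℕ))

noncomputable def extendCoeff (f : MvPowerSeries σ R) : MvPowerSeries τ R :=
  Function.extend e (coeff · f) 0

variable {e}

theorem coeff_extendCoeff_apply (he : Function.Injective e) (f : MvPowerSeries σ R)
    (c : σ →₀ ℕ) : coeff (e c) (extendCoeff e f) = coeff c f :=
  he.extend_apply _ _ c

theorem coeff_extendCoeff_of_notMem_range (f : MvPowerSeries σ R) {d : τ →₀ ℕ}
    (hd : d ∉ Set.range e) : coeff d (extendCoeff e f) = 0 :=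
  Function.extend_apply' _ _ d hd

theorem mem_range_of_coeff_extendCoeff_ne_zero {f : MvPowerSeries σ R} {d : τ →₀ ℕ}
    (hd : coeff d (extendCoeff e f) ≠ 0) : d ∈ Set.range e :=
  not_imp_comm.mp (coeff_extendCoeff_of_notMem_range f) hd

theorem extendCoeff_monomial (he : Function.Injective e) (c : σ →₀ ℕ) (a : R) :
    extendCoeff e (monomial c a) = monomial (e c) a := by
  classical
  ext d
  by_cases hd : d ∈ Set.range e
  · obtain ⟨d, rfl⟩ := hd
    simp only [coeff_extendCoeff_apply he, coeff_monomial, he.eq_iff]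
  · rw [coeff_extendCoeff_of_notMem_range _ hd, coeff_monomial, if_neg]
    rintro rfl
    exact hd ⟨c, rfl⟩

theorem extendCoeff_mul (he : Function.Injective e) (f g : MvPowerSeries σ R) :
    extendCoeff e (f * g) = extendCoeff e f * extendCoeff e g := by
  classical
  ext d
  have support_in_range : ∀ q ∈ antidiagonal d,
      coeff q.1 (extendCoeff e f) * coeff q.2 (extendCoeff e g) ≠ 0 →
        ∃ a b, e a = q.1 ∧ e b = q.2 := fun q _ hq =>
    ⟨_, _, (mem_range_of_coeff_extendCoeff_ne_zero (left_ne_zero_of_mul hq)).choose_spec,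
      (mem_range_of_coeff_extendCoeff_ne_zero (right_ne_zero_of_mul hq)).choose_spec⟩
  rw [coeff_mul]
  by_cases hd : d ∈ Set.range e
  · obtain ⟨c, rfl⟩ := hd
    rw [coeff_extendCoeff_apply he, coeff_mul]
    refine Finset.sum_of_injOn (Prod.map e e) (Prod.map_injective.mpr ⟨he, he⟩).injOn
      (fun p hp => ?_) (fun q hq hq' => ?_) (fun p _ => ?_)
    · rw [Finset.mem_coe, mem_antidiagonal] at hp ⊢
      rw [Prod.map_fst, Prod.map_snd, ← map_add, hp]
    · by_contra hne
      obtain ⟨a, b, ha, hb⟩ := support_in_range q hq hne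
      refine hq' ⟨(a, b), ?_, Prod.ext ha hb⟩
      rw [mem_antidiagonal] at hq
      rw [Finset.mem_coe, mem_antidiagonal]
      exact he (by rw [map_add, ha, hb, hq])
    · simp only [Prod.map_fst, Prod.map_snd, coeff_extendCoeff_apply he]
  · rw [coeff_extendCoeff_of_notMem_range _ hd, eq_comm]
    refine Finset.sum_eq_zero fun q hq => ?_
    by_contra hne
    obtain ⟨a, b, ha, hb⟩ := support_in_range q hq hne
    exact hd ⟨a + b, by rw [map_add, ha, hb, mem_antidiagonal.mp hq]⟩

/-- The substitution `X ^ c ↦ X ^ e c`. -/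
noncomputable def mapExponents (he : Function.Injective e) :
    MvPowerSeries σ R →+* MvPowerSeries τ R where
  toFun := extendCoeff e
  map_one' := by rw [← monomial_zero_one, extendCoeff_monomial he, map_zero, monomial_zero_one]
  map_mul' := extendCoeff_mul he
  map_zero' := by simpa using extendCoeff_monomial he 0 (0 : R)
  map_add' f g := by
    ext d
    by_cases hd : d ∈ Set.range e
    · obtain ⟨c, rfl⟩ := hd
      simp only [map_add, coeff_extendCoeff_apply he]
    · simp only [map_add, coeff_extendCoeff_of_notMem_range _ hd, add_zero]

theorem mapExponents_monomial (he : Function.Injective e) (c : σ →₀ ℕ) (a : R) :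
    mapExponents he (monomial c a) = monomial (e c) a :=
  extendCoeff_monomial he c a

theorem coeff_mapExponents_apply (he : Function.Injective e) (f : MvPowerSeries σ R) (c : σ →₀ ℕ) :
    coeff (e c) (mapExponents he f) = coeff c f :=
  coeff_extendCoeff_apply he f c

theorem coeff_mapExponents_of_notMem_range (he : Function.Injective e) (f : MvPowerSeries σ R)
    {d : τ →₀ ℕ} (hd : d ∉ Set.range e) : coeff d (mapExponents he f) = 0 :=
  coeff_extendCoeff_of_notMem_range f hd

theorem mapExponents_injective (he : Function.Injective e) :
    Function.Injective (mapExponents (R := R) he) := fun f g hfg => by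
  ext c
  rw [← coeff_mapExponents_apply he, hfg, coeff_mapExponents_apply he]

theorem exists_mapExponents_eq (he : Function.Injective e) {G : MvPowerSeries τ R}
    (hG : ∀ d ∉ Set.range e, coeff d G = 0) : ∃ g, mapExponents he g = G := by
  refine ⟨fun c => coeff (e c) G, ?_⟩
  ext d
  by_cases hd : d ∈ Set.range e
  · obtain ⟨c, rfl⟩ := hd
    exact coeff_mapExponents_apply he _ c
  · exact (coeff_mapExponents_of_notMem_range he _ hd).trans (hG d hd).symm

end MapExponents

end MvPowerSeries

noncomputable section Shear

variable (k : ℕ)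

/-- The exponent map of the substitution `X 0 ↦ X 0`, `X 1 ↦ X 0 ^ k * X 1`. -/
def shearExponents : (Fin 2 →₀ ℕ) →+ (Fin 2 →₀ ℕ) where
  toFun d := d + single 0 (k * d 1)
  map_zero' := by simp
  map_add' a b := by
    simp only [Finsupp.add_apply, mul_add, single_add]
    abel

theorem shearExponents_apply (d : Fin 2 →₀ ℕ) : shearExponents k d = d + single 0 (k * d 1) :=
  rfl

theorem shearExponents_apply_one (d : Fin 2 →₀ ℕ) : shearExponents k d 1 = d 1 := by
  simp [shearExponents_apply]

theorem shearExponents_injective : Function.Injective (shearExponents k) := fun a b h => by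
  have h1 : a 1 = b 1 := by
    rw [← shearExponents_apply_one k a, ← shearExponents_apply_one k b, h]
  rw [shearExponents_apply, shearExponents_apply, h1] at h
  exact add_right_cancel h

theorem mem_range_shearExponents {d : Fin 2 →₀ ℕ} :
    d ∈ Set.range (shearExponents k) ↔ k * d 1 ≤ d 0 := by
  constructor
  · rintro ⟨c, rfl⟩
    simp [shearExponents_apply]
  · intro hd
    refine ⟨d - single 0 (k * d 1), ?_⟩
    have h1 : (d - single 0 (k * d 1) : Fin 2 →₀ ℕ) 1 = d 1 := by simp
    rw [shearExponents_apply, h1]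
    exact tsub_add_cancel_of_le (single_le_iff.mpr hd)

variable {R : Type*}

def shear [Semiring R] : MvPowerSeries (Fin 2) R →+* MvPowerSeries (Fin 2) R :=
  mapExponents (shearExponents_injective k)

theorem shear_X_zero [Semiring R] : shear k (X 0 : MvPowerSeries (Fin 2) R) = X 0 := by
  rw [shear, X_def, mapExponents_monomial, shearExponents_apply]
  simp

theorem shear_X_one [Semiring R] : shear k (X 1 : MvPowerSeries (Fin 2) R) = X 0 ^ k * X 1 := by
  rw [shear, X_def, mapExponents_monomial, shearExponents_apply, X_pow_eq,
    monomial_mul_monomial, one_mul, add_comm]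
  simp

theorem shear_injective [Semiring R] : Function.Injective (shear (R := R) k) :=
  mapExponents_injective _

theorem coeff_shear_of_lt [Semiring R] (f : MvPowerSeries (Fin 2) R) {d : Fin 2 →₀ ℕ}
    (hd : d 0 < k * d 1) : coeff d (shear k f) = 0 :=
  coeff_mapExponents_of_notMem_range _ f (by rw [mem_range_shearExponents]; omega)

theorem exists_shear_eq [Semiring R] {G : MvPowerSeries (Fin 2) R}
    (hG : ∀ d : Fin 2 →₀ ℕ, d 0 < k * d 1 → coeff d G = 0) : ∃ g, shear k g = G :=
  exists_mapExponents_eq _ fun d hd => hG d (by rw [mem_range_shearExponents] at hd; omega)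

variable [CommRing R]

theorem coeff_eq_zero_of_shear_eq_node_mul {f g : MvPowerSeries (Fin 2) R}
    (hfg : shear k f = (X 1 ^ 2 - X 0 ^ 2) * g) (d : Fin 2 →₀ ℕ) (hd : d 0 < k * (d 1 + 2)) :
    coeff d g = 0 := by
  induction hn : d 0 using Nat.strong_induction_on generalizing d with
  | _ n ih =>
  -- the coefficient of `X ^ d * Y ^ 2` in `shear k f` vanishes, and it equals
  -- `g_d - g_{d + (-2, 2)}`, where the second index is again below the line
  have key := congrArg (coeff (d + single 1 2)) hfg
  rw [coeff_shear_of_lt k f (by simp; omega), sub_mul, map_sub, X_pow_eq, X_pow_eq,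
    coeff_monomial_mul, coeff_monomial_mul, if_pos le_add_self, one_mul, one_mul,
    add_tsub_cancel_right] at key
  have hprev : (if single 0 2 ≤ d + single 1 2 then
      coeff (d + single 1 2 - single 0 2) g else 0) = 0 := by
    split_ifs with h2
    · have h2 : 2 ≤ d 0 := by simpa using single_le_iff.mp h2
      have := Nat.mul_le_mul_left k (Nat.le_add_right (d 1 + 2) 2)
      exact ih (d 0 - 2) (by omega) (d + single 1 2 - single 0 2) (by simp; omega) (by simp)
    · rfl
  rwa [hprev, sub_zero, eq_comm] at key

theorem exists_eq_X_pow_mul_shear_of_shear_eq_node_mul {f g : MvPowerSeries (Fin 2) R}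
    (hfg : shear k f = (X 1 ^ 2 - X 0 ^ 2) * g) : ∃ h, g = X 0 ^ (2 * k) * shear k h := by
  obtain ⟨g', rfl⟩ : X 0 ^ (2 * k) ∣ g := X_pow_dvd_iff.mpr fun d hd =>
    coeff_eq_zero_of_shear_eq_node_mul k hfg d (by nlinarith)
  obtain ⟨h, rfl⟩ := exists_shear_eq k fun d hd => by
    have := coeff_eq_zero_of_shear_eq_node_mul k hfg (d + single 0 (2 * k)) (by simp; nlinarith)
    rwa [X_pow_eq, coeff_monomial_mul, if_pos le_add_self, one_mul, add_tsub_cancel_right] at this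
  exact ⟨h, rfl⟩

theorem shear_node :
    shear k ((X 1 : MvPowerSeries (Fin 2) R) ^ 2 - X 0 ^ (2 * k + 2)) =
      X 0 ^ (2 * k) * (X 1 ^ 2 - X 0 ^ 2) := by
  rw [map_sub, map_pow, map_pow, shear_X_zero, shear_X_one]
  ring

theorem comap_shear_span_node :
    (Ideal.span {(X 1 : MvPowerSeries (Fin 2) R) ^ 2 - X 0 ^ 2}).comap (shear k) =
      Ideal.span {X 1 ^ 2 - X 0 ^ (2 * k + 2)} := by
  refine le_antisymm (fun f hf => ?_) ?_
  · obtain ⟨g, hg⟩ := Ideal.mem_span_singleton.mp (Ideal.mem_comap.mp hf)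
    obtain ⟨h, rfl⟩ := exists_eq_X_pow_mul_shear_of_shear_eq_node_mul k hg
    refine Ideal.mem_span_singleton.mpr ⟨h, shear_injective k ?_⟩
    rw [hg, map_mul, shear_node]
    ring
  · rw [Ideal.span_le, Set.singleton_subset_iff, SetLike.mem_coe, Ideal.mem_comap, shear_node]
    exact Ideal.mul_mem_left _ _ (Ideal.subset_span rfl)

end Shear

theorem node_subring_is_A_odd_general (k : ℕ) :
    letI A := MvPowerSeries (Fin 2) ℂ ⧸
      Ideal.span {(X 1 : MvPowerSeries (Fin 2) ℂ) ^ 2 - X 0 ^ 2}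
    letI mkA : MvPowerSeries (Fin 2) ℂ →+* A := Ideal.Quotient.mk _
    -- the relation `y_k² = x^{2k+2}` holds in `A`:
    (mkA (X 0 ^ k * X 1)) ^ 2 = (mkA (X 0)) ^ (2 * k + 2) ∧
    -- and it is the only relation:
    ∃ φ : (MvPowerSeries (Fin 2) ℂ ⧸
        Ideal.span {(X 1 : MvPowerSeries (Fin 2) ℂ) ^ 2 - X 0 ^ (2 * k + 2)}) →+* A,
      Function.Injective φ ∧
      φ (Ideal.Quotient.mk _ (X 0)) = mkA (X 0) ∧
      φ (Ideal.Quotient.mk _ (X 1)) = mkA (X 0 ^ k * X 1) := by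
  have hcomap := comap_shear_span_node k (R := ℂ)
  refine ⟨?_, Ideal.quotientMap _ (shear k) hcomap.ge, Ideal.quotientMap_injective' hcomap.le,
    by rw [Ideal.quotientMap_mk, shear_X_zero], by rw [Ideal.quotientMap_mk, shear_X_one]⟩
  rw [← map_pow, ← map_pow, Ideal.Quotient.mk_eq_mk_iff_sub_mem]
  exact Ideal.mem_span_singleton.mpr ⟨X 0 ^ (2 * k), by ring⟩

/-- in `A = ℂ[[x,y]]/(y² - x²)` (the complete local ring of a node),
for `k ≥ 1` the element `y_k = x^k y` satisfies `y_k² - x^{2k+2} = 0`, and this is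
the only relation: the subring generated by `x` and `x^k y` is isomorphic to
`ℂ[[x, y_k]]/(y_k² - x^{2k+2})`, i.e. there is an injective ring homomorphism
`ℂ[[x,y]]/(y² - x^{2k+2}) → A` sending `x ↦ x` and `y ↦ x^k y`. -/
theorem node_subring_is_A_odd (k : ℕ) (hk : 1 ≤ k) :
    letI A := MvPowerSeries (Fin 2) ℂ ⧸
      Ideal.span {(X 1 : MvPowerSeries (Fin 2) ℂ) ^ 2 - X 0 ^ 2}
    letI mkA : MvPowerSeries (Fin 2) ℂ →+* A := Ideal.Quotient.mk _
    -- the relation `y_k² = x^{2k+2}` holds in `A`: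
    (mkA (X 0 ^ k * X 1)) ^ 2 = (mkA (X 0)) ^ (2 * k + 2) ∧
    -- and it is the only relation:
    ∃ φ : (MvPowerSeries (Fin 2) ℂ ⧸
        Ideal.span {(X 1 : MvPowerSeries (Fin 2) ℂ) ^ 2 - X 0 ^ (2 * k + 2)}) →+* A,
      Function.Injective φ ∧
      φ (Ideal.Quotient.mk _ (X 0)) = mkA (X 0) ∧
      φ (Ideal.Quotient.mk _ (X 1)) = mkA (X 0 ^ k * X 1) :=
  node_subring_is_A_odd_general k
end

section
/- In the graded ring $R = \mathbb{C}[x,y,w,v,z,u]/I$ with weights $\deg(x,y,w,v,z,u)=(1,2,3,4,5,6)$, where $I$ is generated by the $2\times 2$ minors of $\begin{pmatrix}0&y&w&z\\x&w&v&u\end{pmatrix}$ together with $z^2 - y g_8(y,v)$, $zu - w g_8(y,v)$, $u^2 - v g_8(y,v) - x^4 h_8(x,v)$, the Hilbert series of $R$ equals the Hilbert series of the half-canonical ring of a type $B(1)$ curve: $\sum_d (\dim_\mathbb{C} R_d) t^d = 1 + t + t^2 + t^3 + 3t^4 + 2t^5 + \cdots$, namely $\dim R_{2n} = \max(1,2n-1)$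 for the even part and $\dim R_1 = 1$, $\dim R_{2n+1} = 2n$ for $n \ge 1$. -/
open MvPolynomial

/-- Degree-`d` graded piece of a weighted-graded quotient ring. -/
noncomputable def gradedPiece {k : ℕ} (w : Fin k → ℕ)
    (I : Ideal (MvPolynomial (Fin k) ℂ)) (d : ℕ) :
    Submodule ℂ (MvPolynomial (Fin k) ℂ ⧸ I) :=
  (weightedHomogeneousSubmodule ℂ w d).map (Ideal.Quotient.mkₐ ℂ I).toLinearMap

namespace B1X

abbrev Wt : Fin 6 → ℕ := ![1, 2, 3, 4, 5, 6]


-- copy of needed defs for testing chunk2 standalone (will merge later)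
def wd (m : Fin 6 →₀ ℕ) : ℕ := m 0 + 2*m 1 + 3*m 2 + 4*m 3 + 5*m 4 + 6*m 5

lemma wt_apply (m : Fin 6 →₀ ℕ) : Finsupp.weight Wt m = wd m := by
  rw [Finsupp.weight_apply, Finsupp.sum_fintype]
  · rw [Fin.sum_univ_six]
    show m 0 * 1 + m 1 * 2 + m 2 * 3 + m 3 * 4 + m 4 * 5 + m 5 * 6 = _
    unfold wd; ring
  · intro i; simp
def Std (m : Fin 6 →₀ ℕ) : Prop :=
  m 2 ≤ 1 ∧ m 4 ≤ 1 ∧ m 5 ≤ 1 ∧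
  (m 0 = 0 ∨ (m 1 = 0 ∧ m 2 = 0 ∧ m 4 = 0)) ∧
  (m 5 = 0 ∨ (m 1 = 0 ∧ m 2 = 0 ∧ m 4 = 0))
instance : DecidablePred Std := fun m => by unfold Std; infer_instance
noncomputable def mFs (a b c d e f : ℕ) : Fin 6 →₀ ℕ :=
  Finsupp.single 0 a + Finsupp.single 1 b + Finsupp.single 2 c +
  Finsupp.single 3 d + Finsupp.single 4 e + Finsupp.single 5 f
lemma mFs_apply (a b c d e f : ℕ) :
    (mFs a b c d e f) 0 = a ∧ (mFs a b c d e f) 1 = b ∧ (mFs a b c d e f) 2 = c ∧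
    (mFs a b c d e f) 3 = d ∧ (mFs a b c d e f) 4 = e ∧ (mFs a b c d e f) 5 = f := by
  simp [mFs, Finsupp.single_apply]
lemma eq_mFs_iff (m : Fin 6 →₀ ℕ) (a b c d e f : ℕ) :
    m = mFs a b c d e f ↔
      (m 0 = a ∧ m 1 = b ∧ m 2 = c ∧ m 3 = d ∧ m 4 = e ∧ m 5 = f) := by
  obtain ⟨h0, h1, h2, h3, h4, h5⟩ := mFs_apply a b c d e f
  constructor
  · rintro rfl; exact ⟨h0, h1, h2, h3, h4, h5⟩
  · rintro ⟨g0, g1, g2, g3, g4, g5⟩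
    ext i
    fin_cases i <;> simp_all
noncomputable def stdF (d : ℕ) : Finset (Fin 6 →₀ ℕ) :=
  ((Finset.univ : Finset (Fin 6 → Fin (d+1))).image
    (fun f => Finsupp.equivFunOnFinite.symm (fun i => (f i : ℕ)))).filter
    (fun m => Std m ∧ wd m = d)
lemma mem_stdF {d : ℕ} {m : Fin 6 →₀ ℕ} : m ∈ stdF d ↔ Std m ∧ wd m = d := by
  constructor
  · intro h; exact (Finset.mem_filter.mp h).2
  · intro h
    have hw : wd m = d := h.2
    have hbound : ∀ i, m i < d + 1 := by
      intro i
      fin_cases i <;>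
        [ (show m 0 < d+1); (show m 1 < d+1); (show m 2 < d+1);
          (show m 3 < d+1); (show m 4 < d+1); (show m 5 < d+1)] <;>
        (unfold wd at hw; omega)
    refine Finset.mem_filter.mpr
      ⟨Finset.mem_image.mpr ⟨fun i => ⟨m i, hbound i⟩, Finset.mem_univ _, ?_⟩, h⟩
    exact Finsupp.equivFunOnFinite.symm_apply_apply m

-- chunk 2: counting
lemma fs_ext {m m' : Fin 6 →₀ ℕ} (h0 : m 0 = m' 0) (h1 : m 1 = m' 1) (h2 : m 2 = m' 2)
    (h3 : m 3 = m' 3) (h4 : m 4 = m' 4) (h5 : m 5 = m' 5) : m = m' := by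
  ext i
  fin_cases i <;> [exact h0; exact h1; exact h2; exact h3; exact h4; exact h5]

lemma card4 {α : Type*} [DecidableEq α] {a b c d : α}
    (hab : a ≠ b) (hac : a ≠ c) (had : a ≠ d) (hbc : b ≠ c) (hbd : b ≠ d) (hcd : c ≠ d) :
    ({a, b, c, d} : Finset α).card = 4 := by
  rw [Finset.card_insert_of_notMem (by simp [hab, hac, had]),
      Finset.card_insert_of_notMem (by simp [hbc, hbd]),
      Finset.card_insert_of_notMem (by simp [hcd]), Finset.card_singleton]

lemma mFs_ne {a b c d e f a' b' c' d' e' f' : ℕ}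
    (h : ¬(a = a' ∧ b = b' ∧ c = c' ∧ d = d' ∧ e = e' ∧ f = f')) :
    mFs a b c d e f ≠ mFs a' b' c' d' e' f' := by
  rw [Ne, eq_mFs_iff]
  obtain ⟨h0, h1, h2, h3, h4, h5⟩ := mFs_apply a b c d e f
  rw [h0, h1, h2, h3, h4, h5]
  exact h


lemma stdF_eq_0 : stdF 0 = {mFs 0 0 0 0 0 0} := by
  ext m
  simp only [mem_stdF, Finset.mem_singleton, eq_mFs_iff]
  unfold Std wd; omega

lemma stdF_eq_1 : stdF 1 = {mFs 1 0 0 0 0 0} := by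
  ext m
  simp only [mem_stdF, Finset.mem_singleton, eq_mFs_iff]
  unfold Std wd; omega

lemma stdF_eq_2 : stdF 2 = {mFs 2 0 0 0 0 0, mFs 0 1 0 0 0 0} := by
  ext m
  simp only [mem_stdF, Finset.mem_insert, Finset.mem_singleton, eq_mFs_iff]
  unfold Std wd; omega

lemma stdF_eq_3 : stdF 3 = {mFs 3 0 0 0 0 0, mFs 0 0 1 0 0 0} := by
  ext m
  simp only [mem_stdF, Finset.mem_insert, Finset.mem_singleton, eq_mFs_iff]
  unfold Std wd; omega

lemma stdF_card_0 : (stdF 0).card = 1 := by rw [stdF_eq_0]; rfl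
lemma stdF_card_1 : (stdF 1).card = 1 := by rw [stdF_eq_1]; rfl

lemma stdF_card_2 : (stdF 2).card = 2 := by
  rw [stdF_eq_2, Finset.card_insert_of_notMem (by simp [mFs_ne]), Finset.card_singleton]

lemma stdF_card_3 : (stdF 3).card = 2 := by
  rw [stdF_eq_3, Finset.card_insert_of_notMem (by simp [mFs_ne]), Finset.card_singleton]

lemma stdF_card_4 : (stdF 4).card = 3 := by
  have h : stdF 4 = {mFs 4 0 0 0 0 0, mFs 0 2 0 0 0 0, mFs 0 0 0 1 0 0} := by
    ext m
    simp only [mem_stdF, Finset.mem_insert, Finset.mem_singleton, eq_mFs_iff]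
    constructor
    · rintro ⟨⟨h2, h4, h5, hA, hB⟩, hw⟩
      unfold wd at hw
      rcases hA with hA | ⟨hA1, hA2, hA3⟩ <;> rcases hB with hB | ⟨hB1, hB2, hB3⟩ <;>
        rcases (by omega : m 2 = 0 ∨ m 2 = 1) with h2' | h2' <;>
        rcases (by omega : m 4 = 0 ∨ m 4 = 1) with h4' | h4' <;>
        rcases (by omega : m 5 = 0 ∨ m 5 = 1) with h5' | h5' <;> omega
    · rintro (h | h | h) <;>
        exact ⟨⟨by omega, by omega, by omega, by omega, by omega⟩, by unfold wd; omega⟩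
  rw [h, Finset.card_insert_of_notMem (by simp [mFs_ne]),
      Finset.card_insert_of_notMem (by simp [mFs_ne]), Finset.card_singleton]

lemma stdF_card_5 : (stdF 5).card = 4 := by
  have h : stdF 5 = {mFs 5 0 0 0 0 0, mFs 1 0 0 1 0 0, mFs 0 1 1 0 0 0, mFs 0 0 0 0 1 0} := by
    ext m
    simp only [mem_stdF, Finset.mem_insert, Finset.mem_singleton, eq_mFs_iff]
    constructor
    · rintro ⟨⟨h2, h4, h5, hA, hB⟩, hw⟩
      unfold wd at hw
      rcases hA with hA | ⟨hA1, hA2, hA3⟩ <;> rcases hB with hB | ⟨hB1, hB2, hB3⟩ <;>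
        rcases (by omega : m 2 = 0 ∨ m 2 = 1) with h2' | h2' <;>
        rcases (by omega : m 4 = 0 ∨ m 4 = 1) with h4' | h4' <;>
        rcases (by omega : m 5 = 0 ∨ m 5 = 1) with h5' | h5' <;> omega
    · rintro (h | h | h | h) <;>
        exact ⟨⟨by omega, by omega, by omega, by omega, by omega⟩, by unfold wd; omega⟩
  rw [h]
  exact card4 (mFs_ne (by omega)) (mFs_ne (by omega)) (mFs_ne (by omega))
    (mFs_ne (by omega)) (mFs_ne (by omega)) (mFs_ne (by omega))

set_option maxHeartbeats 1000000 in
lemma stdF_card_6 : (stdF 6).card = 5 := by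
  have h : stdF 6 = {mFs 6 0 0 0 0 0, mFs 2 0 0 1 0 0, mFs 0 0 0 0 0 1,
      mFs 0 3 0 0 0 0, mFs 0 1 0 1 0 0} := by
    ext m
    simp only [mem_stdF, Finset.mem_insert, Finset.mem_singleton, eq_mFs_iff]
    constructor
    · rintro ⟨⟨h2, h4, h5, hA, hB⟩, hw⟩
      unfold wd at hw
      rcases hA with hA | ⟨hA1, hA2, hA3⟩ <;> rcases hB with hB | ⟨hB1, hB2, hB3⟩ <;>
        rcases (by omega : m 2 = 0 ∨ m 2 = 1) with h2' | h2' <;>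
        rcases (by omega : m 4 = 0 ∨ m 4 = 1) with h4' | h4' <;>
        rcases (by omega : m 5 = 0 ∨ m 5 = 1) with h5' | h5' <;> omega
    · rintro (h | h | h | h | h) <;>
        exact ⟨⟨by omega, by omega, by omega, by omega, by omega⟩, by unfold wd; omega⟩
  rw [h, Finset.card_insert_of_notMem (by simp [mFs_ne])]
  rw [show ({mFs 2 0 0 1 0 0, mFs 0 0 0 0 0 1, mFs 0 3 0 0 0 0, mFs 0 1 0 1 0 0} :
      Finset _).card = 4 from
    card4 (mFs_ne (by omega)) (mFs_ne (by omega)) (mFs_ne (by omega))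
      (mFs_ne (by omega)) (mFs_ne (by omega)) (mFs_ne (by omega))]

set_option maxHeartbeats 1000000 in
lemma stdF_card_7 : (stdF 7).card = 6 := by
  have h : stdF 7 = {mFs 7 0 0 0 0 0, mFs 3 0 0 1 0 0, mFs 1 0 0 0 0 1,
      mFs 0 2 1 0 0 0, mFs 0 0 1 1 0 0, mFs 0 1 0 0 1 0} := by
    ext m
    simp only [mem_stdF, Finset.mem_insert, Finset.mem_singleton, eq_mFs_iff]
    constructor
    · rintro ⟨⟨h2, h4, h5, hA, hB⟩, hw⟩
      unfold wd at hw
      rcases hA with hA | ⟨hA1, hA2, hA3⟩ <;> rcases hB with hB | ⟨hB1, hB2, hB3⟩ <;>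
        rcases (by omega : m 2 = 0 ∨ m 2 = 1) with h2' | h2' <;>
        rcases (by omega : m 4 = 0 ∨ m 4 = 1) with h4' | h4' <;>
        rcases (by omega : m 5 = 0 ∨ m 5 = 1) with h5' | h5' <;> omega
    · rintro (h | h | h | h | h | h) <;>
        exact ⟨⟨by omega, by omega, by omega, by omega, by omega⟩, by unfold wd; omega⟩
  rw [h, Finset.card_insert_of_notMem (by simp [mFs_ne]),
      Finset.card_insert_of_notMem (by simp [mFs_ne])]
  rw [show ({mFs 1 0 0 0 0 1, mFs 0 2 1 0 0 0, mFs 0 0 1 1 0 0, mFs 0 1 0 0 1 0} :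
      Finset _).card = 4 from
    card4 (mFs_ne (by omega)) (mFs_ne (by omega)) (mFs_ne (by omega))
      (mFs_ne (by omega)) (mFs_ne (by omega)) (mFs_ne (by omega))]



lemma subS_apply (m : Fin 6 →₀ ℕ) :
    (m - Finsupp.single 3 1 : Fin 6 →₀ ℕ) 0 = m 0 ∧ (m - Finsupp.single 3 1 : Fin 6 →₀ ℕ) 1 = m 1 ∧
    (m - Finsupp.single 3 1 : Fin 6 →₀ ℕ) 2 = m 2 ∧ (m - Finsupp.single 3 1 : Fin 6 →₀ ℕ) 3 = m 3 - 1 ∧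
    (m - Finsupp.single 3 1 : Fin 6 →₀ ℕ) 4 = m 4 ∧ (m - Finsupp.single 3 1 : Fin 6 →₀ ℕ) 5 = m 5 := by
  refine ⟨?_, ?_, ?_, ?_, ?_, ?_⟩ <;>
    rw [Finsupp.tsub_apply] <;> simp [Finsupp.single_apply]

lemma addS_apply (m : Fin 6 →₀ ℕ) :
    (m + Finsupp.single 3 1 : Fin 6 →₀ ℕ) 0 = m 0 ∧ (m + Finsupp.single 3 1 : Fin 6 →₀ ℕ) 1 = m 1 ∧
    (m + Finsupp.single 3 1 : Fin 6 →₀ ℕ) 2 = m 2 ∧ (m + Finsupp.single 3 1 : Fin 6 →₀ ℕ) 3 = m 3 + 1 ∧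
    (m + Finsupp.single 3 1 : Fin 6 →₀ ℕ) 4 = m 4 ∧ (m + Finsupp.single 3 1 : Fin 6 →₀ ℕ) 5 = m 5 := by
  refine ⟨?_, ?_, ?_, ?_, ?_, ?_⟩ <;>
    rw [Finsupp.add_apply] <;> simp [Finsupp.single_apply]

lemma filter_ne3 (k : ℕ) :
    (stdF (k+8)).filter (fun m => ¬ (m 3 = 0)) = (stdF (k+4)).image (· + Finsupp.single 3 1) := by
  ext m
  simp only [Finset.mem_filter, Finset.mem_image, mem_stdF]
  constructor
  · rintro ⟨⟨⟨h2, h4, h5, hA, hB⟩, hw⟩, h3⟩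
    obtain ⟨c0, c1, c2, c3, c4, c5⟩ := subS_apply m
    unfold wd at hw
    refine ⟨m - Finsupp.single 3 1, ⟨⟨?_, ?_, ?_, ?_, ?_⟩, ?_⟩, ?_⟩
    · rw [c2]; exact h2
    · rw [c4]; exact h4
    · rw [c5]; exact h5
    · rw [c0, c1, c2, c4]; exact hA
    · rw [c5, c1, c2, c4]; exact hB
    · unfold wd; rw [c0, c1, c2, c3, c4, c5]; omega
    · obtain ⟨d0, d1, d2, d3, d4, d5⟩ := addS_apply (m - Finsupp.single 3 1)
      refine fs_ext ?_ ?_ ?_ ?_ ?_ ?_ <;>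
        simp only [d0, d1, d2, d3, d4, d5, c0, c1, c2, c3, c4, c5] <;> omega
  · rintro ⟨m', ⟨⟨h2, h4, h5, hA, hB⟩, hw⟩, rfl⟩
    obtain ⟨d0, d1, d2, d3, d4, d5⟩ := addS_apply m'
    unfold wd at hw
    refine ⟨⟨⟨?_, ?_, ?_, ?_, ?_⟩, ?_⟩, ?_⟩
    · rw [d2]; exact h2
    · rw [d4]; exact h4
    · rw [d5]; exact h5
    · rw [d0, d1, d2, d4]; exact hA
    · rw [d5, d1, d2, d4]; exact hB
    · unfold wd; rw [d0, d1, d2, d3, d4, d5]; omega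
    · rw [d3]; omega

set_option maxHeartbeats 1000000 in
lemma filter_e3_even (j : ℕ) :
    (stdF (2*j+8)).filter (fun m => m 3 = 0) =
      {mFs 0 (j+4) 0 0 0 0, mFs 0 j 1 0 1 0, mFs (2*j+8) 0 0 0 0 0, mFs (2*j+2) 0 0 0 0 1} := by
  ext m
  simp only [Finset.mem_filter, mem_stdF, Finset.mem_insert, Finset.mem_singleton, eq_mFs_iff]
  constructor
  · rintro ⟨⟨⟨h2, h4, h5, hA, hB⟩, hw⟩, h3⟩
    unfold wd at hw
    rcases hA with hA | ⟨hA1, hA2, hA3⟩ <;> rcases hB with hB | ⟨hB1, hB2, hB3⟩ <;>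
      rcases (by omega : m 2 = 0 ∨ m 2 = 1) with h2' | h2' <;>
      rcases (by omega : m 4 = 0 ∨ m 4 = 1) with h4' | h4' <;>
      rcases (by omega : m 5 = 0 ∨ m 5 = 1) with h5' | h5' <;> omega
  · rintro (h | h | h | h) <;>
      exact ⟨⟨⟨by omega, by omega, by omega, by omega, by omega⟩, by unfold wd; omega⟩, by omega⟩

set_option maxHeartbeats 1000000 in
lemma filter_e3_odd (j : ℕ) :
    (stdF (2*j+9)).filter (fun m => m 3 = 0) =
      {mFs 0 (j+3) 1 0 0 0, mFs 0 (j+2) 0 0 1 0, mFs (2*j+9) 0 0 0 0 0, mFs (2*j+3) 0 0 0 0 1} := by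
  ext m
  simp only [Finset.mem_filter, mem_stdF, Finset.mem_insert, Finset.mem_singleton, eq_mFs_iff]
  constructor
  · rintro ⟨⟨⟨h2, h4, h5, hA, hB⟩, hw⟩, h3⟩
    unfold wd at hw
    rcases hA with hA | ⟨hA1, hA2, hA3⟩ <;> rcases hB with hB | ⟨hB1, hB2, hB3⟩ <;>
      rcases (by omega : m 2 = 0 ∨ m 2 = 1) with h2' | h2' <;>
      rcases (by omega : m 4 = 0 ∨ m 4 = 1) with h4' | h4' <;>
      rcases (by omega : m 5 = 0 ∨ m 5 = 1) with h5' | h5' <;> omega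
  · rintro (h | h | h | h) <;>
      exact ⟨⟨⟨by omega, by omega, by omega, by omega, by omega⟩, by unfold wd; omega⟩, by omega⟩

lemma card_rec (k : ℕ) : (stdF (k+8)).card = (stdF (k+4)).card + 4 := by
  have hsplit := Finset.card_filter_add_card_filter_not
    (s := stdF (k+8)) (p := fun m => m 3 = 0)
  rw [filter_ne3 k, Finset.card_image_of_injective _ (add_left_injective _)] at hsplit
  have h4 : ((stdF (k+8)).filter (fun m => m 3 = 0)).card = 4 := by
    rcases Nat.even_or_odd k with ⟨j, hj⟩ | ⟨j, hj⟩
    · subst hj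
      rw [show j + j + 8 = 2*j+8 by ring, filter_e3_even j]
      exact card4 (mFs_ne (by omega)) (mFs_ne (by omega)) (mFs_ne (by omega))
        (mFs_ne (by omega)) (mFs_ne (by omega)) (mFs_ne (by omega))
    · subst hj
      rw [show 2*j + 1 + 8 = 2*j+9 by ring, filter_e3_odd j]
      exact card4 (mFs_ne (by omega)) (mFs_ne (by omega)) (mFs_ne (by omega))
        (mFs_ne (by omega)) (mFs_ne (by omega)) (mFs_ne (by omega))
  omega

lemma card_formula : ∀ k : ℕ, (stdF (k+4)).card = k + 3 := by
  intro k
  induction k using Nat.strong_induction_on with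
  | _ k ih =>
    rcases k with _|_|_|_|j
    · exact stdF_card_4
    · exact stdF_card_5
    · exact stdF_card_6
    · exact stdF_card_7
    · show (stdF (j+8)).card = _
      rw [card_rec j, ih j (by omega)]



/-! ### Generic quadratic algebra `R2[r]/(r² = G)` -/

section Adjoin

local notation "R2" => MvPolynomial (Fin 2) ℂ

noncomputable def pT (G : R2) : Polynomial R2 := Polynomial.X ^ 2 - Polynomial.C G

lemma pT_monic (G : R2) : (pT G).Monic := by
  simpa [pT] using Polynomial.monic_X_pow_sub_C G (two_ne_zero)

lemma pT_natDegree (G : R2) : (pT G).natDegree = 2 := by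
  rw [pT]; compute_degree!

noncomputable def oo (G : R2) : R2 →+* AdjoinRoot (pT G) := AdjoinRoot.of _

lemma root_sq (G : R2) : (AdjoinRoot.root (pT G))^2 = oo G G := by
  have h := AdjoinRoot.mk_self (f := pT G)
  rw [pT, map_sub, map_pow, AdjoinRoot.mk_X, AdjoinRoot.mk_C, sub_eq_zero] at h
  exact h

noncomputable def pb (G : R2) : PowerBasis R2 (AdjoinRoot (pT G)) :=
  AdjoinRoot.powerBasis' (pT_monic G)

lemma repr_of_mul_root_pow (G : R2) (r : R2) (k : ℕ) (hk : k < (pT G).natDegree) :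
    (pb G).basis.repr (oo G r * AdjoinRoot.root (pT G) ^ k)
      = Finsupp.single (⟨k, by rwa [pb, AdjoinRoot.powerBasis'_dim]⟩ : Fin (pb G).dim) r := by
  have hb : (pb G).basis ⟨k, by rwa [pb, AdjoinRoot.powerBasis'_dim]⟩
      = AdjoinRoot.root (pT G) ^ k := by
    rw [PowerBasis.basis_eq_pow]; rfl
  have hsm : oo G r * AdjoinRoot.root (pT G) ^ k
      = r • (pb G).basis ⟨k, by rwa [pb, AdjoinRoot.powerBasis'_dim]⟩ := by
    rw [hb, Algebra.smul_def, AdjoinRoot.algebraMap_eq]; rfl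
  rw [hsm, map_smul, Module.Basis.repr_self, Finsupp.smul_single, smul_eq_mul, mul_one]

noncomputable def ext12 (G : R2) (j : Fin (pb G).dim) (e : Fin 2 →₀ ℕ) :
    AdjoinRoot (pT G) →ₗ[ℂ] ℂ :=
  (lcoeff ℂ e).comp
    (((Finsupp.lapply j).comp (pb G).basis.repr.toLinearMap).restrictScalars ℂ)

lemma ext12_apply (G : R2) (j : Fin (pb G).dim) (e : Fin 2 →₀ ℕ) (r : R2) (k : ℕ)
    (hk : k < (pT G).natDegree) :
    ext12 G j e (oo G r * AdjoinRoot.root (pT G) ^ k)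
      = if (⟨k, by rwa [pb, AdjoinRoot.powerBasis'_dim]⟩ : Fin (pb G).dim) = j
          then r.coeff e else 0 := by
  rw [ext12]
  simp only [LinearMap.coe_comp, Function.comp_apply, LinearMap.coe_restrictScalars,
    Finsupp.lapply_apply, LinearEquiv.coe_coe]
  rw [repr_of_mul_root_pow G r k hk, Finsupp.single_apply]
  split_ifs with h
  · rfl
  · exact map_zero _

lemma dim_pos (G : R2) (k : ℕ) (hk : k < 2) : k < (pT G).natDegree := by
  rwa [pT_natDegree]

end Adjoin

/-! ### The ideal generators and the rewriting (spanning) argument -/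

def gens (g₈ h₈ : MvPolynomial (Fin 6) ℂ) : Set (MvPolynomial (Fin 6) ℂ) :=
  { X 0 * X 1, X 0 * X 2, X 0 * X 4,
    X 1 * X 3 - X 2 ^ 2,
    X 1 * X 5 - X 2 * X 4,
    X 2 * X 5 - X 3 * X 4,
    X 4 ^ 2 - X 1 * g₈,
    X 4 * X 5 - X 2 * g₈,
    X 5 ^ 2 - X 3 * g₈ - X 0 ^ 4 * h₈ }

section Span

variable (g₈ h₈ : MvPolynomial (Fin 6) ℂ)

local notation "P" => MvPolynomial (Fin 6) ℂ

noncomputable def Jid : Ideal (MvPolynomial (Fin 6) ℂ) := Ideal.span (gens g₈ h₈)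

noncomputable def Jsub : Submodule ℂ (MvPolynomial (Fin 6) ℂ) :=
  Submodule.restrictScalars ℂ (Jid g₈ h₈)

noncomputable def Vd (d : ℕ) : Submodule ℂ (MvPolynomial (Fin 6) ℂ) :=
  Submodule.span ℂ ((fun m => (monomial m (1:ℂ) : MvPolynomial (Fin 6) ℂ)) '' ↑(stdF d))

lemma mono_add (a b : Fin 6 →₀ ℕ) :
    (monomial (a + b) (1:ℂ) : P) = monomial a 1 * monomial b 1 := by
  rw [monomial_mul, one_mul]

lemma coord_add3 (p q r : Fin 6 →₀ ℕ) (i : Fin 6) : (p + q + r) i = p i + q i + r i := by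
  simp [Finsupp.add_apply]

lemma wd_add (p q : Fin 6 →₀ ℕ) : wd (p + q) = wd p + wd q := by
  unfold wd; simp only [Finsupp.add_apply]; ring

lemma wd_mFs (a b c d e f : ℕ) : wd (mFs a b c d e f) = a + 2*b + 3*c + 4*d + 5*e + 6*f := by
  obtain ⟨p0, p1, p2, p3, p4, p5⟩ := mFs_apply a b c d e f
  unfold wd; rw [p0, p1, p2, p3, p4, p5]

lemma msplit (m : Fin 6 →₀ ℕ) (b0 b1 b2 b3 b4 b5 : ℕ)
    (h0 : b0 ≤ m 0) (h1 : b1 ≤ m 1) (h2 : b2 ≤ m 2) (h3 : b3 ≤ m 3)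
    (h4 : b4 ≤ m 4) (h5 : b5 ≤ m 5) :
    m = mFs b0 b1 b2 b3 b4 b5 +
      mFs (m 0 - b0) (m 1 - b1) (m 2 - b2) (m 3 - b3) (m 4 - b4) (m 5 - b5) := by
  obtain ⟨p0, p1, p2, p3, p4, p5⟩ := mFs_apply b0 b1 b2 b3 b4 b5
  obtain ⟨q0, q1, q2, q3, q4, q5⟩ :=
    mFs_apply (m 0 - b0) (m 1 - b1) (m 2 - b2) (m 3 - b3) (m 4 - b4) (m 5 - b5)
  refine fs_ext ?_ ?_ ?_ ?_ ?_ ?_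
  · rw [Finsupp.add_apply, p0, q0]; omega
  · rw [Finsupp.add_apply, p1, q1]; omega
  · rw [Finsupp.add_apply, p2, q2]; omega
  · rw [Finsupp.add_apply, p3, q3]; omega
  · rw [Finsupp.add_apply, p4, q4]; omega
  · rw [Finsupp.add_apply, p5, q5]; omega

lemma mFs_add (a0 b0 c0 d0 e0 f0 a1 b1 c1 d1 e1 f1 : ℕ) :
    mFs a0 b0 c0 d0 e0 f0 + mFs a1 b1 c1 d1 e1 f1 =
      mFs (a0+a1) (b0+b1) (c0+c1) (d0+d1) (e0+e1) (f0+f1) := by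
  obtain ⟨p0, p1, p2, p3, p4, p5⟩ := mFs_apply a0 b0 c0 d0 e0 f0
  obtain ⟨q0, q1, q2, q3, q4, q5⟩ := mFs_apply a1 b1 c1 d1 e1 f1
  obtain ⟨r0, r1, r2, r3, r4, r5⟩ := mFs_apply (a0+a1) (b0+b1) (c0+c1) (d0+d1) (e0+e1) (f0+f1)
  refine fs_ext ?_ ?_ ?_ ?_ ?_ ?_
  · rw [Finsupp.add_apply, p0, q0, r0]
  · rw [Finsupp.add_apply, p1, q1, r1]
  · rw [Finsupp.add_apply, p2, q2, r2]
  · rw [Finsupp.add_apply, p3, q3, r3]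
  · rw [Finsupp.add_apply, p4, q4, r4]
  · rw [Finsupp.add_apply, p5, q5, r5]

lemma mu_num_lt {d a b c a' b' c' : ℕ}
    (h : a' < a ∨ (a' = a ∧ b' < b) ∨ (a' = a ∧ b' = b ∧ c' < c))
    (hb : b' ≤ d) (hc : c' ≤ d) :
    a'*(d+1)^2 + b'*(d+1) + c' < a*(d+1)^2 + b*(d+1) + c := by
  rcases h with h | ⟨h, h'⟩ | ⟨h, h', h''⟩
  · have h1 : a' + 1 ≤ a := h
    nlinarith [sq_nonneg (d+1)]
  · subst h; nlinarith
  · subst h; subst h'; omega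

variable {g₈ h₈}

lemma step_mono {V : Submodule ℂ (MvPolynomial (Fin 6) ℂ)} (a m' : Fin 6 →₀ ℕ)
    (hgen : (monomial a (1:ℂ) : P) ∈ gens g₈ h₈) :
    (monomial (a + m') (1:ℂ) : P) ∈ V ⊔ Jsub g₈ h₈ := by
  rw [mono_add]
  exact Submodule.mem_sup_right
    (Ideal.mul_mem_right _ _ (Ideal.subset_span hgen))

lemma step_bin {V : Submodule ℂ (MvPolynomial (Fin 6) ℂ)} (a b m' : Fin 6 →₀ ℕ)
    (hgen : (monomial a (1:ℂ) - monomial b 1 : P) ∈ gens g₈ h₈)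
    (hmem : (monomial (b + m') (1:ℂ) : P) ∈ V ⊔ Jsub g₈ h₈) :
    (monomial (a + m') (1:ℂ) : P) ∈ V ⊔ Jsub g₈ h₈ := by
  have h2 : (monomial (a + m') (1:ℂ) : P) =
      (monomial a 1 - monomial b 1) * monomial m' 1 + monomial (b + m') 1 := by
    rw [mono_add, mono_add]; ring
  rw [h2]
  exact Submodule.add_mem _
    (Submodule.mem_sup_right (Ideal.mul_mem_right _ _ (Ideal.subset_span hgen))) hmem

lemma step_bin' {V : Submodule ℂ (MvPolynomial (Fin 6) ℂ)} (a b m' : Fin 6 →₀ ℕ)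
    (hgen : (monomial b (1:ℂ) - monomial a 1 : P) ∈ gens g₈ h₈)
    (hmem : (monomial (b + m') (1:ℂ) : P) ∈ V ⊔ Jsub g₈ h₈) :
    (monomial (a + m') (1:ℂ) : P) ∈ V ⊔ Jsub g₈ h₈ := by
  have h2 : (monomial (a + m') (1:ℂ) : P) =
      (monomial b 1 - monomial a 1) * (-(monomial m' 1)) + monomial (b + m') 1 := by
    rw [mono_add, mono_add]; ring
  rw [h2]
  exact Submodule.add_mem _
    (Submodule.mem_sup_right (Ideal.mul_mem_right _ _ (Ideal.subset_span hgen))) hmem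

lemma step_g {V : Submodule ℂ (MvPolynomial (Fin 6) ℂ)} (a b m' : Fin 6 →₀ ℕ) (G : P)
    (hgen : (monomial a (1:ℂ) - monomial b 1 * G : P) ∈ gens g₈ h₈)
    (hmem : monomial b (1:ℂ) * G * monomial m' 1 ∈ V ⊔ Jsub g₈ h₈) :
    (monomial (a + m') (1:ℂ) : P) ∈ V ⊔ Jsub g₈ h₈ := by
  have h2 : (monomial (a + m') (1:ℂ) : P) =
      (monomial a 1 - monomial b 1 * G) * monomial m' 1 + monomial b 1 * G * monomial m' 1 := by
    rw [mono_add]; ring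
  rw [h2]
  exact Submodule.add_mem _
    (Submodule.mem_sup_right (Ideal.mul_mem_right _ _ (Ideal.subset_span hgen))) hmem

lemma step_g2 {V : Submodule ℂ (MvPolynomial (Fin 6) ℂ)} (a b c m' : Fin 6 →₀ ℕ) (G H : P)
    (hgen : (monomial a (1:ℂ) - monomial b 1 * G - monomial c 1 * H : P) ∈ gens g₈ h₈)
    (hmem1 : monomial b (1:ℂ) * G * monomial m' 1 ∈ V ⊔ Jsub g₈ h₈)
    (hmem2 : monomial c (1:ℂ) * H * monomial m' 1 ∈ V ⊔ Jsub g₈ h₈) :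
    (monomial (a + m') (1:ℂ) : P) ∈ V ⊔ Jsub g₈ h₈ := by
  have h2 : (monomial (a + m') (1:ℂ) : P) =
      (monomial a 1 - monomial b 1 * G - monomial c 1 * H) * monomial m' 1 +
        (monomial b 1 * G * monomial m' 1 + monomial c 1 * H * monomial m' 1) := by
    rw [mono_add]; ring
  rw [h2]
  exact Submodule.add_mem _
    (Submodule.mem_sup_right (Ideal.mul_mem_right _ _ (Ideal.subset_span hgen)))
    (Submodule.add_mem _ hmem1 hmem2)

lemma tail_mem {V : Submodule ℂ (MvPolynomial (Fin 6) ℂ)} (b m' : Fin 6 →₀ ℕ) (G : P)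
    (H : ∀ μ ∈ G.support, (monomial (b + μ + m') (1:ℂ) : P) ∈ V ⊔ Jsub g₈ h₈) :
    monomial b (1:ℂ) * G * monomial m' 1 ∈ V ⊔ Jsub g₈ h₈ := by
  have h : monomial b (1:ℂ) * G * monomial m' 1 =
      ∑ μ ∈ G.support, G.coeff μ • monomial (b + μ + m') 1 := by
    conv_lhs => rw [G.as_sum]
    rw [Finset.mul_sum, Finset.sum_mul]
    refine Finset.sum_congr rfl fun μ hμ => ?_
    simp only [monomial_mul, smul_monomial, one_mul, mul_one, smul_eq_mul]
  rw [h]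
  exact Submodule.sum_mem _ fun μ hμ => Submodule.smul_mem _ _ (H μ hμ)

/- generator membership in monomial form -/

lemma g1mem : (monomial (mFs 1 1 0 0 0 0) (1:ℂ) : P) ∈ gens g₈ h₈ := by
  have h : (monomial (mFs 1 1 0 0 0 0) (1:ℂ) : P) = X 0 * X 1 := by
    rw [show mFs 1 1 0 0 0 0 = Finsupp.single 0 1 + Finsupp.single 1 1 by simp [mFs], mono_add]
    rfl
  rw [h]; simp [gens]

lemma g2mem : (monomial (mFs 1 0 1 0 0 0) (1:ℂ) : P) ∈ gens g₈ h₈ := by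
  have h : (monomial (mFs 1 0 1 0 0 0) (1:ℂ) : P) = X 0 * X 2 := by
    rw [show mFs 1 0 1 0 0 0 = Finsupp.single 0 1 + Finsupp.single 2 1 by simp [mFs], mono_add]
    rfl
  rw [h]; simp [gens]

lemma g3mem : (monomial (mFs 1 0 0 0 1 0) (1:ℂ) : P) ∈ gens g₈ h₈ := by
  have h : (monomial (mFs 1 0 0 0 1 0) (1:ℂ) : P) = X 0 * X 4 := by
    rw [show mFs 1 0 0 0 1 0 = Finsupp.single 0 1 + Finsupp.single 4 1 by simp [mFs], mono_add]
    rfl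
  rw [h]; simp [gens]

lemma g4mem :
    (monomial (mFs 0 1 0 1 0 0) (1:ℂ) - monomial (mFs 0 0 2 0 0 0) 1 : P) ∈ gens g₈ h₈ := by
  have h1 : (monomial (mFs 0 1 0 1 0 0) (1:ℂ) : P) = X 1 * X 3 := by
    rw [show mFs 0 1 0 1 0 0 = Finsupp.single 1 1 + Finsupp.single 3 1 by simp [mFs], mono_add]
    rfl
  have h2 : (monomial (mFs 0 0 2 0 0 0) (1:ℂ) : P) = X 2 ^ 2 := by
    rw [show mFs 0 0 2 0 0 0 = Finsupp.single 2 2 by simp [mFs], ← X_pow_eq_monomial]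
  rw [h1, h2]; simp [gens]

lemma g5mem :
    (monomial (mFs 0 1 0 0 0 1) (1:ℂ) - monomial (mFs 0 0 1 0 1 0) 1 : P) ∈ gens g₈ h₈ := by
  have h1 : (monomial (mFs 0 1 0 0 0 1) (1:ℂ) : P) = X 1 * X 5 := by
    rw [show mFs 0 1 0 0 0 1 = Finsupp.single 1 1 + Finsupp.single 5 1 by simp [mFs], mono_add]
    rfl
  have h2 : (monomial (mFs 0 0 1 0 1 0) (1:ℂ) : P) = X 2 * X 4 := by
    rw [show mFs 0 0 1 0 1 0 = Finsupp.single 2 1 + Finsupp.single 4 1 by simp [mFs], mono_add]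
    rfl
  rw [h1, h2]; simp [gens]

lemma g6mem :
    (monomial (mFs 0 0 1 0 0 1) (1:ℂ) - monomial (mFs 0 0 0 1 1 0) 1 : P) ∈ gens g₈ h₈ := by
  have h1 : (monomial (mFs 0 0 1 0 0 1) (1:ℂ) : P) = X 2 * X 5 := by
    rw [show mFs 0 0 1 0 0 1 = Finsupp.single 2 1 + Finsupp.single 5 1 by simp [mFs], mono_add]
    rfl
  have h2 : (monomial (mFs 0 0 0 1 1 0) (1:ℂ) : P) = X 3 * X 4 := by
    rw [show mFs 0 0 0 1 1 0 = Finsupp.single 3 1 + Finsupp.single 4 1 by simp [mFs], mono_add]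
    rfl
  rw [h1, h2]; simp [gens]

lemma g7mem :
    (monomial (mFs 0 0 0 0 2 0) (1:ℂ) - monomial (mFs 0 1 0 0 0 0) 1 * g₈ : P) ∈ gens g₈ h₈ := by
  have h1 : (monomial (mFs 0 0 0 0 2 0) (1:ℂ) : P) = X 4 ^ 2 := by
    rw [show mFs 0 0 0 0 2 0 = Finsupp.single 4 2 by simp [mFs], ← X_pow_eq_monomial]
  have h2 : (monomial (mFs 0 1 0 0 0 0) (1:ℂ) : P) = X 1 := by
    rw [show mFs 0 1 0 0 0 0 = Finsupp.single 1 1 by simp [mFs]]; rfl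
  rw [h1, h2]; simp [gens]

lemma g8mem :
    (monomial (mFs 0 0 0 0 1 1) (1:ℂ) - monomial (mFs 0 0 1 0 0 0) 1 * g₈ : P) ∈ gens g₈ h₈ := by
  have h1 : (monomial (mFs 0 0 0 0 1 1) (1:ℂ) : P) = X 4 * X 5 := by
    rw [show mFs 0 0 0 0 1 1 = Finsupp.single 4 1 + Finsupp.single 5 1 by simp [mFs], mono_add]
    rfl
  have h2 : (monomial (mFs 0 0 1 0 0 0) (1:ℂ) : P) = X 2 := by
    rw [show mFs 0 0 1 0 0 0 = Finsupp.single 2 1 by simp [mFs]]; rfl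
  rw [h1, h2]; simp [gens]

lemma g9mem :
    (monomial (mFs 0 0 0 0 0 2) (1:ℂ) - monomial (mFs 0 0 0 1 0 0) 1 * g₈
      - monomial (mFs 4 0 0 0 0 0) 1 * h₈ : P) ∈ gens g₈ h₈ := by
  have h1 : (monomial (mFs 0 0 0 0 0 2) (1:ℂ) : P) = X 5 ^ 2 := by
    rw [show mFs 0 0 0 0 0 2 = Finsupp.single 5 2 by simp [mFs], ← X_pow_eq_monomial]
  have h2 : (monomial (mFs 0 0 0 1 0 0) (1:ℂ) : P) = X 3 := by
    rw [show mFs 0 0 0 1 0 0 = Finsupp.single 3 1 by simp [mFs]]; rfl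
  have h3 : (monomial (mFs 4 0 0 0 0 0) (1:ℂ) : P) = X 0 ^ 4 := by
    rw [show mFs 4 0 0 0 0 0 = Finsupp.single 0 4 by simp [mFs], ← X_pow_eq_monomial]
  rw [h1, h2, h3]; simp [gens]

end Span

section SpanMain

variable {g₈ h₈ : MvPolynomial (Fin 6) ℂ}

local notation "P" => MvPolynomial (Fin 6) ℂ

lemma mFs_cond {N d : ℕ} {Q : (Fin 6 →₀ ℕ) → Prop}
    (ih : ∀ m : Fin 6 →₀ ℕ, m 5 * (d+1)^2 + m 4 * (d+1) + m 2 < N → wd m = d → Q m)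
    (A B C D E F : ℕ) (h1 : F*(d+1)^2 + E*(d+1) + C < N) (h2 : A+2*B+3*C+4*D+5*E+6*F = d) :
    Q (mFs A B C D E F) := by
  obtain ⟨q0, q1, q2, q3, q4, q5⟩ := mFs_apply A B C D E F
  exact ih _ (by rw [q5, q4, q2]; exact h1) (by rw [wd_mFs]; exact h2)

set_option maxHeartbeats 2000000 in
lemma span_main (hg : g₈ ∈ weightedHomogeneousSubmodule ℂ Wt 8)
    (hgvars : ∀ m ∈ g₈.support, m 0 = 0 ∧ m 2 = 0 ∧ m 4 = 0 ∧ m 5 = 0)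
    (hh : h₈ ∈ weightedHomogeneousSubmodule ℂ Wt 8)
    (hhvars : ∀ m ∈ h₈.support, m 1 = 0 ∧ m 2 = 0 ∧ m 4 = 0 ∧ m 5 = 0)
    (d : ℕ) :
    ∀ N : ℕ, ∀ m : Fin 6 →₀ ℕ, m 5 * (d+1)^2 + m 4 * (d+1) + m 2 < N → wd m = d →
      (monomial m (1:ℂ) : P) ∈ Vd d ⊔ Jsub g₈ h₈ := by
  have hg' : IsWeightedHomogeneous Wt g₈ 8 := hg
  have hh' : IsWeightedHomogeneous Wt h₈ 8 := hh
  have hgdeg : ∀ μ ∈ g₈.support, wd μ = 8 := by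
    intro μ hμ
    have := hg' (mem_support_iff.mp hμ)
    rwa [wt_apply] at this
  have hhdeg : ∀ μ ∈ h₈.support, wd μ = 8 := by
    intro μ hμ
    have := hh' (mem_support_iff.mp hμ)
    rwa [wt_apply] at this
  intro N
  induction N with
  | zero => exact fun m h _ => absurd h (Nat.not_lt_zero _)
  | succ N ih =>
    intro m hμ hwd
    by_cases hstd : Std m
    · exact Submodule.mem_sup_left (Submodule.subset_span
        ⟨m, by rw [Finset.mem_coe, mem_stdF]; exact ⟨hstd, hwd⟩, rfl⟩)
    unfold wd at hwd
    by_cases c1 : 1 ≤ m 0 ∧ 1 ≤ m 1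
    · rw [msplit m 1 1 0 0 0 0 (by omega) (by omega) (by omega) (by omega) (by omega) (by omega)]
      exact step_mono _ _ g1mem
    by_cases c2 : 1 ≤ m 0 ∧ 1 ≤ m 2
    · rw [msplit m 1 0 1 0 0 0 (by omega) (by omega) (by omega) (by omega) (by omega) (by omega)]
      exact step_mono _ _ g2mem
    by_cases c3 : 1 ≤ m 0 ∧ 1 ≤ m 4
    · rw [msplit m 1 0 0 0 1 0 (by omega) (by omega) (by omega) (by omega) (by omega) (by omega)]
      exact step_mono _ _ g3mem
    by_cases c4 : 2 ≤ m 2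
    · rw [msplit m 0 0 2 0 0 0 (by omega) (by omega) (by omega) (by omega) (by omega) (by omega)]
      refine step_bin' _ _ _ g4mem ?_
      rw [mFs_add]
      refine mFs_cond ih _ _ _ _ _ _ ?_ ?_
      · refine lt_of_lt_of_le (mu_num_lt ?_ ?_ ?_) (Nat.lt_succ_iff.mp hμ) <;> omega
      · omega
    by_cases c5 : 1 ≤ m 1 ∧ 1 ≤ m 5
    · rw [msplit m 0 1 0 0 0 1 (by omega) (by omega) (by omega) (by omega) (by omega) (by omega)]
      refine step_bin _ _ _ g5mem ?_
      rw [mFs_add]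
      refine mFs_cond ih _ _ _ _ _ _ ?_ ?_
      · refine lt_of_lt_of_le (mu_num_lt ?_ ?_ ?_) (Nat.lt_succ_iff.mp hμ) <;> omega
      · omega
    by_cases c6 : 1 ≤ m 2 ∧ 1 ≤ m 5
    · rw [msplit m 0 0 1 0 0 1 (by omega) (by omega) (by omega) (by omega) (by omega) (by omega)]
      refine step_bin _ _ _ g6mem ?_
      rw [mFs_add]
      refine mFs_cond ih _ _ _ _ _ _ ?_ ?_
      · refine lt_of_lt_of_le (mu_num_lt ?_ ?_ ?_) (Nat.lt_succ_iff.mp hμ) <;> omega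
      · omega
    by_cases c7 : 2 ≤ m 4
    · rw [msplit m 0 0 0 0 2 0 (by omega) (by omega) (by omega) (by omega) (by omega) (by omega)]
      refine step_g _ _ _ g₈ g7mem (tail_mem _ _ _ ?_)
      intro μ hμ'
      obtain ⟨hv0, hv2, hv4, hv5⟩ := hgvars μ hμ'
      have hwμ : wd μ = 8 := hgdeg μ hμ'
      refine ih _ ?_ ?_
      · obtain ⟨p0, p1, p2, p3, p4, p5⟩ := mFs_apply 0 1 0 0 0 0
        obtain ⟨q0, q1, q2, q3, q4, q5⟩ :=
          mFs_apply (m 0 - 0) (m 1 - 0) (m 2 - 0) (m 3 - 0) (m 4 - 2) (m 5 - 0)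
        rw [coord_add3, coord_add3, coord_add3, p5, p4, p2, q5, q4, q2, hv5, hv4, hv2]
        refine lt_of_lt_of_le (mu_num_lt ?_ ?_ ?_) (Nat.lt_succ_iff.mp hμ) <;> omega
      · rw [wd_add, wd_add, wd_mFs, wd_mFs, hwμ]
        omega
    by_cases c8 : 1 ≤ m 4 ∧ 1 ≤ m 5
    · rw [msplit m 0 0 0 0 1 1 (by omega) (by omega) (by omega) (by omega) (by omega) (by omega)]
      refine step_g _ _ _ g₈ g8mem (tail_mem _ _ _ ?_)
      intro μ hμ'
      obtain ⟨hv0, hv2, hv4, hv5⟩ := hgvars μ hμ'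
      have hwμ : wd μ = 8 := hgdeg μ hμ'
      refine ih _ ?_ ?_
      · obtain ⟨p0, p1, p2, p3, p4, p5⟩ := mFs_apply 0 0 1 0 0 0
        obtain ⟨q0, q1, q2, q3, q4, q5⟩ :=
          mFs_apply (m 0 - 0) (m 1 - 0) (m 2 - 0) (m 3 - 0) (m 4 - 1) (m 5 - 1)
        rw [coord_add3, coord_add3, coord_add3, p5, p4, p2, q5, q4, q2, hv5, hv4, hv2]
        refine lt_of_lt_of_le (mu_num_lt ?_ ?_ ?_) (Nat.lt_succ_iff.mp hμ) <;> omega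
      · rw [wd_add, wd_add, wd_mFs, wd_mFs, hwμ]
        omega
    by_cases c9 : 2 ≤ m 5
    · rw [msplit m 0 0 0 0 0 2 (by omega) (by omega) (by omega) (by omega) (by omega) (by omega)]
      refine step_g2 _ _ _ _ g₈ h₈ g9mem (tail_mem _ _ _ ?_) (tail_mem _ _ _ ?_)
      · intro μ hμ'
        obtain ⟨hv0, hv2, hv4, hv5⟩ := hgvars μ hμ'
        have hwμ : wd μ = 8 := hgdeg μ hμ'
        refine ih _ ?_ ?_
        · obtain ⟨p0, p1, p2, p3, p4, p5⟩ := mFs_apply 0 0 0 1 0 0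
          obtain ⟨q0, q1, q2, q3, q4, q5⟩ :=
            mFs_apply (m 0 - 0) (m 1 - 0) (m 2 - 0) (m 3 - 0) (m 4 - 0) (m 5 - 2)
          rw [coord_add3, coord_add3, coord_add3, p5, p4, p2, q5, q4, q2, hv5, hv4, hv2]
          refine lt_of_lt_of_le (mu_num_lt ?_ ?_ ?_) (Nat.lt_succ_iff.mp hμ) <;> omega
        · rw [wd_add, wd_add, wd_mFs, wd_mFs, hwμ]
          omega
      · intro μ hμ'
        obtain ⟨hv1, hv2, hv4, hv5⟩ := hhvars μ hμ'
        have hwμ : wd μ = 8 := hhdeg μ hμ'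
        refine ih _ ?_ ?_
        · obtain ⟨p0, p1, p2, p3, p4, p5⟩ := mFs_apply 4 0 0 0 0 0
          obtain ⟨q0, q1, q2, q3, q4, q5⟩ :=
            mFs_apply (m 0 - 0) (m 1 - 0) (m 2 - 0) (m 3 - 0) (m 4 - 0) (m 5 - 2)
          rw [coord_add3, coord_add3, coord_add3, p5, p4, p2, q5, q4, q2, hv5, hv4, hv2]
          refine lt_of_lt_of_le (mu_num_lt ?_ ?_ ?_) (Nat.lt_succ_iff.mp hμ) <;> omega
        · rw [wd_add, wd_add, wd_mFs, wd_mFs, hwμ]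
          omega
    exact absurd (by unfold Std; omega) hstd

end SpanMain

/-! ### The two evaluation maps -/

section Maps

local notation "R2" => MvPolynomial (Fin 2) ℂ

variable (g₈ h₈ : MvPolynomial (Fin 6) ℂ)

noncomputable def subT : Fin 6 → R2 := ![0, X 0 ^ 2, X 0 * X 1, X 1 ^ 2, 0, 0]
noncomputable def subU : Fin 6 → R2 := ![X 0, 0, 0, X 1, 0, 0]
noncomputable def GT : R2 := aeval (subT) g₈
noncomputable def QU : R2 := X 1 * aeval (subU) g₈ + X 0 ^ 4 * aeval (subU) h₈

noncomputable def fT : Fin 6 → AdjoinRoot (pT (GT g₈)) :=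
  ![0, oo _ (X 0 ^ 2), oo _ (X 0 * X 1), oo _ (X 1 ^ 2),
    oo _ (X 0) * AdjoinRoot.root _, oo _ (X 1) * AdjoinRoot.root _]

noncomputable def fU : Fin 6 → AdjoinRoot (pT (QU g₈ h₈)) :=
  ![oo _ (X 0), 0, 0, oo _ (X 1), 0, AdjoinRoot.root _]

lemma fT_0 : fT g₈ 0 = 0 := rfl
lemma fT_1 : fT g₈ 1 = oo _ (X 0 ^ 2) := rfl
lemma fT_2 : fT g₈ 2 = oo _ (X 0 * X 1) := rfl
lemma fT_3 : fT g₈ 3 = oo _ (X 1 ^ 2) := rfl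
lemma fT_4 : fT g₈ 4 = oo _ (X 0) * AdjoinRoot.root _ := rfl
lemma fT_5 : fT g₈ 5 = oo _ (X 1) * AdjoinRoot.root _ := rfl

lemma fU_0 : fU g₈ h₈ 0 = oo _ (X 0) := rfl
lemma fU_1 : fU g₈ h₈ 1 = 0 := rfl
lemma fU_2 : fU g₈ h₈ 2 = 0 := rfl
lemma fU_3 : fU g₈ h₈ 3 = oo _ (X 1) := rfl
lemma fU_4 : fU g₈ h₈ 4 = 0 := rfl
lemma fU_5 : fU g₈ h₈ 5 = AdjoinRoot.root _ := rfl

lemma aeval_sub_congr13 {A : Type} [CommRing A] [Algebra ℂ A] (f g : Fin 6 → A)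
    (p : MvPolynomial (Fin 6) ℂ)
    (hp : ∀ m ∈ p.support, m 0 = 0 ∧ m 2 = 0 ∧ m 4 = 0 ∧ m 5 = 0)
    (h1 : f 1 = g 1) (h3 : f 3 = g 3) : aeval f p = aeval g p := by
  rw [aeval_def, aeval_def]
  apply eval₂_congr
  intro i c hic hc
  have hm := hp c (mem_support_iff.mpr hc)
  have hi : c i ≠ 0 := Finsupp.mem_support_iff.mp hic
  fin_cases i
  · exact absurd hm.1 hi
  · exact h1
  · exact absurd hm.2.1 hi
  · exact h3
  · exact absurd hm.2.2.1 hi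
  · exact absurd hm.2.2.2 hi

lemma aeval_sub_congr03 {A : Type} [CommRing A] [Algebra ℂ A] (f g : Fin 6 → A)
    (p : MvPolynomial (Fin 6) ℂ)
    (hp : ∀ m ∈ p.support, m 1 = 0 ∧ m 2 = 0 ∧ m 4 = 0 ∧ m 5 = 0)
    (h0 : f 0 = g 0) (h3 : f 3 = g 3) : aeval f p = aeval g p := by
  rw [aeval_def, aeval_def]
  apply eval₂_congr
  intro i c hic hc
  have hm := hp c (mem_support_iff.mpr hc)
  have hi : c i ≠ 0 := Finsupp.mem_support_iff.mp hic
  fin_cases i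
  · exact h0
  · exact absurd hm.1 hi
  · exact absurd hm.2.1 hi
  · exact h3
  · exact absurd hm.2.2.1 hi
  · exact absurd hm.2.2.2 hi

lemma aeval_oo (G : R2) (sub : Fin 6 → R2) (p : MvPolynomial (Fin 6) ℂ) :
    aeval (fun i => oo G (sub i)) p = oo G (aeval sub p) := by
  have h3 : ∀ x : R2, IsScalarTower.toAlgHom ℂ R2 (AdjoinRoot (pT G)) x = oo G x := by
    intro x
    show algebraMap R2 (AdjoinRoot (pT G)) x = oo G x
    rw [AdjoinRoot.algebraMap_eq]; rfl
  rw [show (fun i => oo G (sub i))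
        = (fun i => (IsScalarTower.toAlgHom ℂ R2 (AdjoinRoot (pT G))) (sub i)) from
      funext fun i => (h3 (sub i)).symm,
    ← MvPolynomial.comp_aeval, AlgHom.comp_apply, h3]

lemma aeval_fT_g (hgvars : ∀ m ∈ g₈.support, m 0 = 0 ∧ m 2 = 0 ∧ m 4 = 0 ∧ m 5 = 0) :
    aeval (fT g₈) g₈ = oo (GT g₈) (GT g₈) :=
  (aeval_sub_congr13 (fT g₈) (fun i => oo (GT g₈) (subT i)) g₈ hgvars rfl rfl).trans
    (aeval_oo _ _ _)

lemma aeval_fU_g (hgvars : ∀ m ∈ g₈.support, m 0 = 0 ∧ m 2 = 0 ∧ m 4 = 0 ∧ m 5 = 0) :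
    aeval (fU g₈ h₈) g₈ = oo (QU g₈ h₈) (aeval (subU) g₈) :=
  (aeval_sub_congr13 (fU g₈ h₈) (fun i => oo (QU g₈ h₈) (subU i)) g₈ hgvars
    (map_zero _).symm rfl).trans (aeval_oo _ _ _)

lemma aeval_fU_h (hhvars : ∀ m ∈ h₈.support, m 1 = 0 ∧ m 2 = 0 ∧ m 4 = 0 ∧ m 5 = 0) :
    aeval (fU g₈ h₈) h₈ = oo (QU g₈ h₈) (aeval (subU) h₈) :=
  (aeval_sub_congr03 (fU g₈ h₈) (fun i => oo (QU g₈ h₈) (subU i)) h₈ hhvars rfl rfl).trans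
    (aeval_oo _ _ _)

lemma kerT (hgvars : ∀ m ∈ g₈.support, m 0 = 0 ∧ m 2 = 0 ∧ m 4 = 0 ∧ m 5 = 0) :
    ∀ p ∈ gens g₈ h₈, aeval (fT g₈) p = 0 := by
  intro p hp
  have hgg := aeval_fT_g g₈ hgvars
  simp only [gens, Set.mem_insert_iff, Set.mem_singleton_iff] at hp
  rcases hp with rfl | rfl | rfl | rfl | rfl | rfl | rfl | rfl | rfl
  · simp only [map_mul, aeval_X, fT_0, zero_mul]
  · simp only [map_mul, aeval_X, fT_0, zero_mul]
  · simp only [map_mul, aeval_X, fT_0, zero_mul]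
  · simp only [map_sub, map_mul, map_pow, aeval_X, fT_1, fT_2, fT_3]; ring
  · simp only [map_sub, map_mul, map_pow, aeval_X, fT_1, fT_2, fT_4, fT_5]; ring
  · simp only [map_sub, map_mul, map_pow, aeval_X, fT_2, fT_3, fT_4, fT_5]; ring
  · simp only [map_sub, map_mul, map_pow, aeval_X, fT_1, fT_4, hgg, mul_pow, root_sq]; ring
  · simp only [map_sub, map_mul, map_pow, aeval_X, fT_2, fT_4, fT_5, hgg]
    ring_nf
    simp only [root_sq]
    ring
  · simp only [map_sub, map_mul, map_pow, aeval_X, fT_0, fT_3, fT_5, hgg, mul_pow, root_sq]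
    rw [show ((0:AdjoinRoot (pT (GT g₈)))^4 = 0) from by norm_num]
    ring

lemma kerU (hgvars : ∀ m ∈ g₈.support, m 0 = 0 ∧ m 2 = 0 ∧ m 4 = 0 ∧ m 5 = 0)
    (hhvars : ∀ m ∈ h₈.support, m 1 = 0 ∧ m 2 = 0 ∧ m 4 = 0 ∧ m 5 = 0) :
    ∀ p ∈ gens g₈ h₈, aeval (fU g₈ h₈) p = 0 := by
  intro p hp
  have hgg := aeval_fU_g g₈ h₈ hgvars
  have hhh := aeval_fU_h g₈ h₈ hhvars
  simp only [gens, Set.mem_insert_iff, Set.mem_singleton_iff] at hp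
  rcases hp with rfl | rfl | rfl | rfl | rfl | rfl | rfl | rfl | rfl
  · simp only [map_mul, aeval_X, fU_1, mul_zero]
  · simp only [map_mul, aeval_X, fU_2, mul_zero]
  · simp only [map_mul, aeval_X, fU_4, mul_zero]
  · simp only [map_sub, map_mul, map_pow, aeval_X, fU_1, fU_2]; simp
  · simp only [map_sub, map_mul, map_pow, aeval_X, fU_1, fU_2, fU_4, fU_5]; simp
  · simp only [map_sub, map_mul, map_pow, aeval_X, fU_2, fU_3, fU_4, fU_5]; simp
  · simp only [map_sub, map_mul, map_pow, aeval_X, fU_1, fU_4, hgg]; simp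
  · simp only [map_sub, map_mul, map_pow, aeval_X, fU_2, fU_4, fU_5, hgg]; simp
  · simp only [map_sub, map_mul, map_pow, aeval_X, fU_0, fU_3, fU_5, hgg, hhh]
    rw [root_sq, show oo (QU g₈ h₈) (QU g₈ h₈)
        = oo (QU g₈ h₈) (X 1 * aeval (subU) g₈ + X 0 ^ 4 * aeval (subU) h₈) from rfl,
      map_add, map_mul, map_mul, map_pow]
    ring

end Maps

/-! ### Linear independence of standard monomials -/

section Ind

local notation "R2" => MvPolynomial (Fin 2) ℂ

variable (g₈ h₈ : MvPolynomial (Fin 6) ℂ)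

noncomputable def e1 (m : Fin 6 →₀ ℕ) : Fin 2 →₀ ℕ :=
  Finsupp.single 0 (2*m 1 + m 2 + m 4) + Finsupp.single 1 (m 2 + 2*m 3)

noncomputable def e2 (m : Fin 6 →₀ ℕ) : Fin 2 →₀ ℕ :=
  Finsupp.single 0 (m 0) + Finsupp.single 1 (m 3)

lemma pair_coords (a b : ℕ) :
    (Finsupp.single (0 : Fin 2) a + Finsupp.single 1 b : Fin 2 →₀ ℕ) 0 = a ∧
    (Finsupp.single (0 : Fin 2) a + Finsupp.single 1 b : Fin 2 →₀ ℕ) 1 = b := by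
  constructor <;> simp [Finsupp.single_apply]

lemma e1_coords (m : Fin 6 →₀ ℕ) :
    e1 m 0 = 2*m 1 + m 2 + m 4 ∧ e1 m 1 = m 2 + 2*m 3 := pair_coords _ _

lemma e2_coords (m : Fin 6 →₀ ℕ) : e2 m 0 = m 0 ∧ e2 m 1 = m 3 := pair_coords _ _

lemma aeval_mono6 {A : Type} [CommRing A] [Algebra ℂ A] (f : Fin 6 → A) (m : Fin 6 →₀ ℕ) :
    aeval f (monomial m (1:ℂ)) =
      f 0 ^ m 0 * f 1 ^ m 1 * f 2 ^ m 2 * f 3 ^ m 3 * f 4 ^ m 4 * f 5 ^ m 5 := by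
  rw [aeval_monomial, map_one, one_mul, Finsupp.prod_fintype _ _ (fun i => pow_zero _),
    Fin.prod_univ_six]

lemma X2pow (a b : ℕ) :
    (X 0 ^ a * X 1 ^ b : R2) = monomial (Finsupp.single 0 a + Finsupp.single 1 b) 1 := by
  rw [X_pow_eq_monomial, X_pow_eq_monomial, monomial_mul, one_mul]

lemma phiU_val_B (m : Fin 6 →₀ ℕ) (h1 : m 1 = 0) (h2 : m 2 = 0) (h4 : m 4 = 0) :
    aeval (fU g₈ h₈) (monomial m (1:ℂ)) =
      oo (QU g₈ h₈) (monomial (e2 m) 1) * AdjoinRoot.root (pT (QU g₈ h₈)) ^ (m 5) := by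
  rw [aeval_mono6, fU_0, fU_1, fU_2, fU_3, fU_4, fU_5, h1, h2, h4]
  simp only [pow_zero, mul_one, one_mul]
  rw [show e2 m = Finsupp.single 0 (m 0) + Finsupp.single 1 (m 3) from rfl,
    ← X2pow, map_mul, map_pow, map_pow]

lemma phiU_val_zero (m : Fin 6 →₀ ℕ) (h : ¬(m 1 = 0 ∧ m 2 = 0 ∧ m 4 = 0)) :
    aeval (fU g₈ h₈) (monomial m (1:ℂ)) = 0 := by
  rw [aeval_mono6, fU_1, fU_2, fU_4]
  by_cases h1 : m 1 = 0
  · by_cases h2 : m 2 = 0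
    · have h4 : m 4 ≠ 0 := by tauto
      rw [zero_pow h4]; ring
    · rw [zero_pow h2]; ring
  · rw [zero_pow h1]; ring

lemma phiT_val (m : Fin 6 →₀ ℕ) (h0 : m 0 = 0) (h5 : m 5 = 0) :
    aeval (fT g₈) (monomial m (1:ℂ)) =
      oo (GT g₈) (monomial (e1 m) 1) * AdjoinRoot.root (pT (GT g₈)) ^ (m 4) := by
  rw [aeval_mono6, fT_0, fT_1, fT_2, fT_3, fT_4, fT_5, h0, h5, pow_zero, pow_zero,
    show e1 m = Finsupp.single 0 (2*m 1 + m 2 + m 4) + Finsupp.single 1 (m 2 + 2*m 3)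
      from rfl,
    ← X2pow, map_mul, map_pow, map_pow, map_mul, map_pow, map_pow, mul_pow]
  simp only [pow_zero, mul_one, one_mul]
  ring

lemma sum_extract {ι : Type*} (s : Finset ι) (c : ι → ℂ) (v : ι → ℂ) (i₀ : ι)
    (hi₀ : i₀ ∈ s) (hv : v i₀ = 1) (hz : ∀ b ∈ s, b ≠ i₀ → c b * v b = 0)
    (hsum : ∑ i ∈ s, c i * v i = 0) : c i₀ = 0 := by
  rw [Finset.sum_eq_single_of_mem i₀ hi₀ (fun b hb hne => hz b hb hne), hv, mul_one] at hsum
  exact hsum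

lemma indep (hgvars : ∀ m ∈ g₈.support, m 0 = 0 ∧ m 2 = 0 ∧ m 4 = 0 ∧ m 5 = 0)
    (hhvars : ∀ m ∈ h₈.support, m 1 = 0 ∧ m 2 = 0 ∧ m 4 = 0 ∧ m 5 = 0) (d : ℕ) :
    LinearIndependent ℂ (fun m : {x // x ∈ stdF d} =>
      ((aeval (fT g₈) (monomial m.1 (1:ℂ)), aeval (fU g₈ h₈) (monomial m.1 (1:ℂ))) :
        AdjoinRoot (pT (GT g₈)) × AdjoinRoot (pT (QU g₈ h₈)))) := by
  rw [linearIndependent_iff']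
  intro s c hsum i₀ hi₀
  have hstd : ∀ i : {x // x ∈ stdF d}, Std i.1 := fun i => (mem_stdF.mp i.2).1
  -- the two component equations
  have hU : ∑ i ∈ s, c i • aeval (fU g₈ h₈) (monomial i.1 (1:ℂ)) = 0 := by
    have h2 := congrArg
      (LinearMap.snd ℂ (AdjoinRoot (pT (GT g₈))) (AdjoinRoot (pT (QU g₈ h₈)))) hsum
    simpa only [map_sum, map_smul, LinearMap.snd_apply, map_zero] using h2
  have hT : ∑ i ∈ s, c i • aeval (fT g₈) (monomial i.1 (1:ℂ)) = 0 := by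
    have h2 := congrArg
      (LinearMap.fst ℂ (AdjoinRoot (pT (GT g₈))) (AdjoinRoot (pT (QU g₈ h₈)))) hsum
    simpa only [map_sum, map_smul, LinearMap.fst_apply, map_zero] using h2
  -- Step A : coefficients of monomials with m1 = m2 = m4 = 0 vanish
  have stepA : ∀ i ∈ s, (i.1 1 = 0 ∧ i.1 2 = 0 ∧ i.1 4 = 0) → c i = 0 := by
    intro i hi hB
    obtain ⟨hB1, hB2, hB4⟩ := hB
    have hk : (i.1 5) < (pT (QU g₈ h₈)).natDegree :=
      dim_pos _ _ (by have := (hstd i).2.2.1; omega)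
    set j : Fin (pb (QU g₈ h₈)).dim :=
      ⟨i.1 5, by rw [pb, AdjoinRoot.powerBasis'_dim]; exact hk⟩ with hj
    have happ := congrArg (ext12 (QU g₈ h₈) j (e2 i.1)) hU
    rw [map_sum, map_zero] at happ
    simp only [map_smul, smul_eq_mul] at happ
    refine sum_extract s c _ i hi ?_ ?_ happ
    · rw [phiU_val_B g₈ h₈ i.1 hB1 hB2 hB4, ext12_apply _ _ _ _ _ hk, if_pos rfl,
        coeff_monomial, if_pos rfl]
    · intro b hb hne
      by_cases hBb : b.1 1 = 0 ∧ b.1 2 = 0 ∧ b.1 4 = 0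
      · obtain ⟨hb1, hb2, hb4⟩ := hBb
        have hkb : (b.1 5) < (pT (QU g₈ h₈)).natDegree :=
          dim_pos _ _ (by have := (hstd b).2.2.1; omega)
        rw [phiU_val_B g₈ h₈ b.1 hb1 hb2 hb4, ext12_apply _ _ _ _ _ hkb]
        split_ifs with hcond
        · rw [coeff_monomial]
          split_ifs with hcond2
          · -- b = i, contradiction
            exfalso
            apply hne
            have h5 : b.1 5 = i.1 5 := by
              have := congrArg (fun z : Fin (pb (QU g₈ h₈)).dim => (z : ℕ)) hcond
              simpa using this
            have h0 : b.1 0 = i.1 0 := by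
              have := (DFunLike.congr_fun hcond2 0)
              rwa [(e2_coords b.1).1, (e2_coords i.1).1] at this
            have h3 : b.1 3 = i.1 3 := by
              have := (DFunLike.congr_fun hcond2 1)
              rwa [(e2_coords b.1).2, (e2_coords i.1).2] at this
            exact Subtype.ext (fs_ext h0 (by omega) (by omega) h3 (by omega) h5)
          · rw [mul_zero]
        · rw [mul_zero]
      · rw [phiU_val_zero g₈ h₈ b.1 hBb, map_zero, mul_zero]
  -- Step B : remaining coefficients
  by_cases hB : i₀.1 1 = 0 ∧ i₀.1 2 = 0 ∧ i₀.1 4 = 0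
  · exact stepA i₀ hi₀ hB
  · have h00 : i₀.1 0 = 0 := by
      have h := (hstd i₀).2.2.2.1
      rcases h with h | h
      · exact h
      · exact absurd h hB
    have h05 : i₀.1 5 = 0 := by
      have h := (hstd i₀).2.2.2.2
      rcases h with h | h
      · exact h
      · exact absurd h hB
    have hk : (i₀.1 4) < (pT (GT g₈)).natDegree :=
      dim_pos _ _ (by have := (hstd i₀).2.1; omega)
    set j : Fin (pb (GT g₈)).dim :=
      ⟨i₀.1 4, by rw [pb, AdjoinRoot.powerBasis'_dim]; exact hk⟩ with hj
    have happ := congrArg (ext12 (GT g₈) j (e1 i₀.1)) hT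
    rw [map_sum, map_zero] at happ
    simp only [map_smul, smul_eq_mul] at happ
    refine sum_extract s c _ i₀ hi₀ ?_ ?_ happ
    · rw [phiT_val g₈ i₀.1 h00 h05, ext12_apply _ _ _ _ _ hk, if_pos rfl,
        coeff_monomial, if_pos rfl]
    · intro b hb hne
      by_cases hBb : b.1 1 = 0 ∧ b.1 2 = 0 ∧ b.1 4 = 0
      · rw [stepA b hb hBb, zero_mul]
      · have hb0 : b.1 0 = 0 := by
          have h := (hstd b).2.2.2.1
          rcases h with h | h
          · exact h
          · exact absurd h hBb
        have hb5 : b.1 5 = 0 := by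
          have h := (hstd b).2.2.2.2
          rcases h with h | h
          · exact h
          · exact absurd h hBb
        have hkb : (b.1 4) < (pT (GT g₈)).natDegree :=
          dim_pos _ _ (by have := (hstd b).2.1; omega)
        rw [phiT_val g₈ b.1 hb0 hb5, ext12_apply _ _ _ _ _ hkb]
        split_ifs with hcond
        · rw [coeff_monomial]
          split_ifs with hcond2
          · exfalso
            apply hne
            have h4 : b.1 4 = i₀.1 4 := by
              have := congrArg (fun z : Fin (pb (GT g₈)).dim => (z : ℕ)) hcond
              simpa using this
            have hA : 2*(b.1 1) + b.1 2 + b.1 4 = 2*(i₀.1 1) + i₀.1 2 + i₀.1 4 := by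
              have := (DFunLike.congr_fun hcond2 0)
              rwa [(e1_coords b.1).1, (e1_coords i₀.1).1] at this
            have hBc : b.1 2 + 2*(b.1 3) = i₀.1 2 + 2*(i₀.1 3) := by
              have := (DFunLike.congr_fun hcond2 1)
              rwa [(e1_coords b.1).2, (e1_coords i₀.1).2] at this
            have hstdb := hstd b
            have hstdi := hstd i₀
            unfold Std at hstdb hstdi
            exact Subtype.ext (fs_ext (by omega) (by omega) (by omega) (by omega)
              (by omega) (by omega))
          · rw [mul_zero]
        · rw [mul_zero]

end Ind

/-! ### Assembly -/

section Assembly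

variable (g₈ h₈ : MvPolynomial (Fin 6) ℂ)

local notation "P" => MvPolynomial (Fin 6) ℂ

set_option synthInstance.maxHeartbeats 400000 in
lemma gradedPiece_eq (hg : g₈ ∈ weightedHomogeneousSubmodule ℂ Wt 8)
    (hgvars : ∀ m ∈ g₈.support, m 0 = 0 ∧ m 2 = 0 ∧ m 4 = 0 ∧ m 5 = 0)
    (hh : h₈ ∈ weightedHomogeneousSubmodule ℂ Wt 8)
    (hhvars : ∀ m ∈ h₈.support, m 1 = 0 ∧ m 2 = 0 ∧ m 4 = 0 ∧ m 5 = 0) (d : ℕ) :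
    gradedPiece Wt (Ideal.span (gens g₈ h₈)) d =
      Submodule.span ℂ ((fun m => Ideal.Quotient.mk (Ideal.span (gens g₈ h₈))
        (monomial m (1:ℂ))) '' ↑(stdF d)) := by
  apply le_antisymm
  · rintro x ⟨p, hp, rfl⟩
    have hp' : p ∈ Vd d ⊔ Jsub g₈ h₈ := by
      have hwh : IsWeightedHomogeneous Wt p d := hp
      rw [p.as_sum]
      refine Submodule.sum_mem _ fun μ hμ => ?_
      have hwd : wd μ = d := by
        have := hwh (mem_support_iff.mp hμ)
        rwa [wt_apply] at this
      have : (monomial μ (p.coeff μ) : P) = p.coeff μ • monomial μ 1 := by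
        rw [smul_monomial, smul_eq_mul, mul_one]
      rw [this]
      exact Submodule.smul_mem _ _
        (span_main hg hgvars hh hhvars d (μ 5 * (d+1)^2 + μ 4 * (d+1) + μ 2 + 1) μ
          (Nat.lt_succ_self _) hwd)
    obtain ⟨v, hv, q, hq, rfl⟩ := Submodule.mem_sup.mp hp'
    have hmk : (Ideal.Quotient.mkₐ ℂ (Ideal.span (gens g₈ h₈))).toLinearMap (v + q)
        = Ideal.Quotient.mk (Ideal.span (gens g₈ h₈)) v := by
      have hq0 : Ideal.Quotient.mk (Ideal.span (gens g₈ h₈)) q = 0 :=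
        Ideal.Quotient.eq_zero_iff_mem.mpr hq
      show Ideal.Quotient.mk (Ideal.span (gens g₈ h₈)) (v + q) = _
      rw [map_add (Ideal.Quotient.mk (Ideal.span (gens g₈ h₈))), hq0, add_zero]
    rw [hmk]
    have hv' := Submodule.mem_map_of_mem
      (f := (Ideal.Quotient.mkₐ ℂ (Ideal.span (gens g₈ h₈))).toLinearMap) hv
    rw [Vd, Submodule.map_span] at hv'
    rw [Set.image_image] at hv'
    exact hv'
  · rw [Submodule.span_le]
    rintro x ⟨m, hm, rfl⟩
    have hstd := mem_stdF.mp hm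
    have hwh : (monomial m (1:ℂ) : P) ∈ weightedHomogeneousSubmodule ℂ Wt d := by
      refine isWeightedHomogeneous_monomial _ _ _ ?_
      rw [wt_apply]; exact hstd.2
    exact Submodule.mem_map_of_mem hwh

lemma finrank_gradedPiece (hg : g₈ ∈ weightedHomogeneousSubmodule ℂ Wt 8)
    (hgvars : ∀ m ∈ g₈.support, m 0 = 0 ∧ m 2 = 0 ∧ m 4 = 0 ∧ m 5 = 0)
    (hh : h₈ ∈ weightedHomogeneousSubmodule ℂ Wt 8)
    (hhvars : ∀ m ∈ h₈.support, m 1 = 0 ∧ m 2 = 0 ∧ m 4 = 0 ∧ m 5 = 0) (d : ℕ) :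
    Module.finrank ℂ (gradedPiece Wt (Ideal.span (gens g₈ h₈)) d) = (stdF d).card := by
  classical
  -- the algebra map to the product
  have hker : ∀ a ∈ Ideal.span (gens g₈ h₈),
      (AlgHom.prod (aeval (fT g₈)) (aeval (fU g₈ h₈))) a = 0 := by
    intro a ha
    have hle : Ideal.span (gens g₈ h₈) ≤
        RingHom.ker (AlgHom.prod (aeval (fT g₈)) (aeval (fU g₈ h₈))).toRingHom := by
      rw [Ideal.span_le]
      intro p hp
      show (AlgHom.prod (aeval (fT g₈)) (aeval (fU g₈ h₈))) p = 0
      have := kerT g₈ h₈ hgvars p hp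
      have := kerU g₈ h₈ hgvars hhvars p hp
      apply Prod.ext <;> simp_all [AlgHom.prod_apply]
    exact hle ha
  set Ψ := Ideal.Quotient.liftₐ (Ideal.span (gens g₈ h₈))
    (AlgHom.prod (aeval (fT g₈)) (aeval (fU g₈ h₈))) hker with hΨ
  set F := (fun m : {x // x ∈ stdF d} =>
    Ideal.Quotient.mk (Ideal.span (gens g₈ h₈)) (monomial m.1 (1:ℂ))) with hF
  have hcomp : ∀ m : {x // x ∈ stdF d}, Ψ (F m) =
      (aeval (fT g₈) (monomial m.1 (1:ℂ)), aeval (fU g₈ h₈) (monomial m.1 (1:ℂ))) := by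
    intro m
    rw [hF, hΨ]
    exact Ideal.Quotient.liftₐ_apply _ _ _ _
  have hindF : LinearIndependent ℂ F := by
    apply LinearIndependent.of_comp Ψ.toLinearMap
    have : (Ψ.toLinearMap ∘ F) = (fun m : {x // x ∈ stdF d} =>
        ((aeval (fT g₈) (monomial m.1 (1:ℂ)), aeval (fU g₈ h₈) (monomial m.1 (1:ℂ))) :
          AdjoinRoot (pT (GT g₈)) × AdjoinRoot (pT (QU g₈ h₈)))) := by
      funext m
      exact hcomp m
    rw [this]
    exact indep g₈ h₈ hgvars hhvars d
  have hspan : gradedPiece Wt (Ideal.span (gens g₈ h₈)) d = Submodule.span ℂ (Set.range F) := by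
    rw [gradedPiece_eq g₈ h₈ hg hgvars hh hhvars d]
    congr 1
    rw [hF]
    exact Set.image_eq_range _ _
  rw [hspan, finrank_span_eq_card hindF, Fintype.card_coe]

end Assembly

end B1X

/-- in the graded ring `R = ℂ[x,y,w,v,z,u]/I` with weights
`(1,2,3,4,5,6)` (variables `X 0 = x, X 1 = y, X 2 = w, X 3 = v, X 4 = z, X 5 = u`),
where `I` is generated by the 2×2 minors of `!![0,y,w,z; x,w,v,u]` together with
`z² - y·g₈(y,v)`, `zu - w·g₈(y,v)`, `u² - v·g₈(y,v) - x⁴·h₈(x,v)`,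
with `g₈ = αv² + v·h₄(y) + k₈(y)` (`α ≠ 0`) and `h₈` weighted-homogeneous of degree 8,
the Hilbert function of `R` is that of the half-canonical ring of a type `B(1)` curve:
`dim R₀ = 1`, `dim R₁ = 1`, `dim R₂ = 2`, `dim R_{2n} = 2n-1` for `n ≥ 2`, and
`dim R_{2n+1} = 2n` for `n ≥ 1` (in particular `dim R₃ = 2`). -/
theorem hilbert_function_half_canonical_B1
    (g₈ h₈ : MvPolynomial (Fin 6) ℂ)
    (hg : g₈ ∈ weightedHomogeneousSubmodule ℂ ![1, 2, 3, 4, 5, 6] 8)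
    (hgvars : ∀ m ∈ g₈.support, m 0 = 0 ∧ m 2 = 0 ∧ m 4 = 0 ∧ m 5 = 0)  -- g₈ = g₈(y,v)
    (hgv2 : MvPolynomial.coeff (Finsupp.single 3 2) g₈ ≠ 0)  -- coefficient α of v²
    (hh : h₈ ∈ weightedHomogeneousSubmodule ℂ ![1, 2, 3, 4, 5, 6] 8)
    (hhvars : ∀ m ∈ h₈.support, m 1 = 0 ∧ m 2 = 0 ∧ m 4 = 0 ∧ m 5 = 0)  -- h₈ = h₈(x,v)
    (I : Ideal (MvPolynomial (Fin 6) ℂ))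
    (hI : I = Ideal.span
      { X 0 * X 1, X 0 * X 2, X 0 * X 4,                -- xy, xw, xz
        X 1 * X 3 - X 2 ^ 2,                            -- yv - w²
        X 1 * X 5 - X 2 * X 4,                          -- yu - wz
        X 2 * X 5 - X 3 * X 4,                          -- wu - vz
        X 4 ^ 2 - X 1 * g₈,                             -- z² - y g₈
        X 4 * X 5 - X 2 * g₈,                           -- zu - w g₈
        X 5 ^ 2 - X 3 * g₈ - X 0 ^ 4 * h₈ }) :          -- u² - v g₈ - x⁴ h₈
    Module.finrank ℂ (gradedPiece ![1, 2, 3, 4, 5, 6] I 0) = 1 ∧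
    Module.finrank ℂ (gradedPiece ![1, 2, 3, 4, 5, 6] I 1) = 1 ∧
    Module.finrank ℂ (gradedPiece ![1, 2, 3, 4, 5, 6] I 2) = 2 ∧
    (∀ n : ℕ, 2 ≤ n →
      Module.finrank ℂ (gradedPiece ![1, 2, 3, 4, 5, 6] I (2 * n)) = 2 * n - 1) ∧
    (∀ n : ℕ, 1 ≤ n →
      Module.finrank ℂ (gradedPiece ![1, 2, 3, 4, 5, 6] I (2 * n + 1)) = 2 * n) := by
  subst hI
  refine ⟨?_, ?_, ?_, ?_, ?_⟩
  · exact (B1X.finrank_gradedPiece g₈ h₈ hg hgvars hh hhvars 0).trans B1X.stdF_card_0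
  · exact (B1X.finrank_gradedPiece g₈ h₈ hg hgvars hh hhvars 1).trans B1X.stdF_card_1
  · exact (B1X.finrank_gradedPiece g₈ h₈ hg hgvars hh hhvars 2).trans B1X.stdF_card_2
  · intro n hn
    have h1 : (B1X.stdF (2*n)).card = 2*n - 1 := by
      have h := B1X.card_formula (2*n - 4)
      rw [show 2*n - 4 + 4 = 2*n by omega] at h
      omega
    exact (B1X.finrank_gradedPiece g₈ h₈ hg hgvars hh hhvars (2*n)).trans h1
  · intro n hn
    rcases eq_or_lt_of_le hn with h | h
    · have hn1 : n = 1 := h.symm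
      subst hn1
      exact (B1X.finrank_gradedPiece g₈ h₈ hg hgvars hh hhvars 3).trans B1X.stdF_card_3
    · have h1 : (B1X.stdF (2*n+1)).card = 2*n := by
        have h2 := B1X.card_formula (2*n+1-4)
        rw [show 2*n+1-4+4 = 2*n+1 by omega] at h2
        omega
      exact (B1X.finrank_gradedPiece g₈ h₈ hg hgvars hh hhvars (2*n+1)).trans h1
end
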